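/- arXiv:2311.10153 — 6 statements merged into one kernel-verified Lean document; each statement's English description precedes it below -/
import Mathlib

section
/- For every n ≥ 1, k ≥ 1, every symmetric matrix A ∈ {0,1}^{n×n} with zero diagonal, and every e ∈ [k]^n, the maximum-likelihood modularity and the integrated conditional likelihood modularity satisfy |Q_ICL(e) − Q_ML(e)| ≤ k²(log n + 2)/n². -/
open Finset Filter
open scoped Classical BigOperators Topology

noncomputable section

namespace SBM

variable {n k : ℕ}

/-- Number of nodes with label `a`. -/
def nCount (z : Fin n → Fin k) (a : Fin k) : ℕ :=
  (Finset.univ.filter fun i => z i = a).card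

/-- `n_{ab}(z)`. -/
def nab (z : Fin n → Fin k) (a b : Fin k) : ℝ :=
  if a = b then (nCount z a : ℝ) * ((nCount z a : ℝ) - 1)
  else (nCount z a : ℝ) * (nCount z b : ℝ)

/-- `o_{ab}(z)`: number of (ordered) edges between communities `a` and `b`. -/
def oab (A : Fin n → Fin n → Bool) (z : Fin n → Fin k) (a b : Fin k) : ℝ :=
  ∑ i : Fin n, ∑ j : Fin n, if z i = a ∧ z j = b ∧ A i j = true then (1 : ℝ) else 0

/-- `τ(x) = x log x + (1-x) log(1-x)` (with `Real.log 0 = 0`, so `0 log 0 = 0`). -/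
def tau (x : ℝ) : ℝ := x * Real.log x + (1 - x) * Real.log (1 - x)

/-- Maximum likelihood modularity. -/
def QML (A : Fin n → Fin n → Bool) (z : Fin n → Fin k) : ℝ :=
  (1 / (2 * (n : ℝ) ^ 2)) *
    ∑ a : Fin k, ∑ b : Fin k, nab z a b * tau (oab A z a b / nab z a b)

/-- The Beta function. -/
def Beta (x y : ℝ) : ℝ := Real.Gamma x * Real.Gamma y / Real.Gamma (x + y)

def otilde (A : Fin n → Fin n → Bool) (z : Fin n → Fin k) (a b : Fin k) : ℝ :=
  if a = b then oab A z a b / 2 else oab A z a b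

def ntilde (z : Fin n → Fin k) (a b : Fin k) : ℝ :=
  if a = b then nab z a b / 2 else nab z a b

/-- Integrated conditional likelihood modularity. -/
def QICL (A : Fin n → Fin n → Bool) (z : Fin n → Fin k) : ℝ :=
  (1 / (n : ℝ) ^ 2) *
    ∑ p ∈ Finset.univ.filter (fun p : Fin k × Fin k => p.1 ≤ p.2),
      Real.log (Beta (otilde A z p.1 p.2 + 1 / 2)
          (ntilde z p.1 p.2 - otilde A z p.1 p.2 + 1 / 2) / Beta (1 / 2) (1 / 2))

/-- The adjacency matrix is symmetric with zero diagonal. -/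
def ValidAdj (A : Fin n → Fin n → Bool) : Prop :=
  (∀ i j, A i j = A j i) ∧ ∀ i, A i i = false

/-- Density of the conditional SBM edge model given the labels `z`:
independent Bernoulli(`ρ S (z i) (z j)`) edges for `i < j`. -/
def edgeDensity (ρ : ℝ) (S : Matrix (Fin k) (Fin k) ℝ) (z : Fin n → Fin k)
    (A : Fin n → Fin n → Bool) : ℝ :=
  ∏ p ∈ Finset.univ.filter (fun p : Fin n × Fin n => p.1 < p.2),
    (if A p.1 p.2 then ρ * S (z p.1) (z p.2) else 1 - ρ * S (z p.1) (z p.2))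

/-- Conditional probability of an event on the adjacency matrix, given labels `z`. -/
def condProb (ρ : ℝ) (S : Matrix (Fin k) (Fin k) ℝ) (z : Fin n → Fin k)
    (E : (Fin n → Fin n → Bool) → Prop) : ℝ :=
  ∑ A : Fin n → Fin n → Bool, if ValidAdj A ∧ E A then edgeDensity ρ S z A else 0

/-- Conditional expectation of a function of the adjacency matrix, given labels `z`. -/
def condExp (ρ : ℝ) (S : Matrix (Fin k) (Fin k) ℝ) (z : Fin n → Fin k)
    (f : (Fin n → Fin n → Bool) → ℝ) : ℝ :=
  ∑ A : Fin n → Fin n → Bool, if ValidAdj A then edgeDensity ρ S z A * f A else 0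

/-- Probability of an event under the SBM: labels are i.i.d. `π`, edges are conditionally
independent Bernoulli(`ρ S (z i) (z j)`). -/
def sbmProb (π : Fin k → ℝ) (ρ : ℝ) (S : Matrix (Fin k) (Fin k) ℝ)
    (E : (Fin n → Fin k) → (Fin n → Fin n → Bool) → Prop) : ℝ :=
  ∑ z : Fin n → Fin k, (∏ i, π (z i)) * condProb ρ S z (E z)

/-- Number of disagreements between two label vectors. -/
def hamming (e z : Fin n → Fin k) : ℕ :=
  (Finset.univ.filter fun i => e i ≠ z i).card

/-- Misclassification distance: minimum number of disagreements over permutations of labels. -/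
def mDist (e z : Fin n → Fin k) : ℕ :=
  Finset.univ.inf' ⟨Equiv.refl (Fin k), Finset.mem_univ _⟩
    (fun σ : Equiv.Perm (Fin k) => (Finset.univ.filter fun i => e i ≠ σ (z i)).card)

/-- Confusion matrix `R(e,z)`. -/
def confusion (e z : Fin n → Fin k) : Matrix (Fin k) (Fin k) ℝ :=
  Matrix.of fun a b => (1 / (n : ℝ)) * ∑ i : Fin n, if e i = a ∧ z i = b then (1 : ℝ) else 0

/-- `[R 1]_a` : row sums. -/
def rowSum (R : Matrix (Fin k) (Fin k) ℝ) (a : Fin k) : ℝ := ∑ j, R a j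

/-- `[Rᵀ 1]_a` : column sums. -/
def colSum (R : Matrix (Fin k) (Fin k) ℝ) (a : Fin k) : ℝ := ∑ i, R i a

/-- `[P_R]_{ab}`. -/
def PR (P R : Matrix (Fin k) (Fin k) ℝ) (n : ℕ) (a b : Fin k) : ℝ :=
  ((R * P * R.transpose) a b - (if a = b then (∑ i, P i i * R a i) / n else 0)) /
    (rowSum R a * (rowSum R b - if a = b then 1 / (n : ℝ) else 0))

/-- The population modularity `H_{P,n}(R)`. -/
def Hmod (P R : Matrix (Fin k) (Fin k) ℝ) (n : ℕ) : ℝ :=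
  (1 / 2) * ∑ a : Fin k, ∑ b : Fin k,
    rowSum R a * (rowSum R b - if a = b then 1 / (n : ℝ) else 0) * tau (PR P R n a b)

/-- The centered modularity `X(e,z)` (with `P = ρ S`). -/
def Xfun (ρ : ℝ) (S : Matrix (Fin k) (Fin k) ℝ) (A : Fin n → Fin n → Bool)
    (e z : Fin n → Fin k) : ℝ :=
  (1 / (2 * (n : ℝ) ^ 2)) * ∑ a : Fin k, ∑ b : Fin k,
    nab e a b * (tau (oab A e a b / nab e a b) - tau (PR (ρ • S) (confusion e z) n a b))

/-- The limit functional `G_S(R)` (terms with `[RSRᵀ]_{ab} = 0` vanish). -/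
def GS (S R : Matrix (Fin k) (Fin k) ℝ) : ℝ :=
  ∑ a : Fin k, ∑ b : Fin k,
    (R * S * R.transpose) a b *
      Real.log ((R * S * R.transpose) a b / (rowSum R a * rowSum R b))

/-- Entry-wise `ℓ¹` norm of a matrix. -/
def l1norm (M : Matrix (Fin k) (Fin k) ℝ) : ℝ := ∑ a : Fin k, ∑ b : Fin k, |M a b|

/-- `s_max`. -/
def sMax (S : Matrix (Fin k) (Fin k) ℝ) : ℝ :=
  sSup (Set.range fun p : Fin k × Fin k => S p.1 p.2)

/-- `s_min`. -/
def sMin (S : Matrix (Fin k) (Fin k) ℝ) : ℝ :=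
  sInf (Set.range fun p : Fin k × Fin k => S p.1 p.2)

/-- `H_t(p‖q) = (1-t)p + tq - p^{1-t} q^t`. -/
def Ht (t p q : ℝ) : ℝ := (1 - t) * p + t * q - p ^ (1 - t) * q ^ t

/-- `max_{t ∈ [0,1]} Σ_a π_a H_t(S_{ab} ‖ S_{ab'})`. -/
def CtMax (π : Fin k → ℝ) (S : Matrix (Fin k) (Fin k) ℝ) (b b' : Fin k) : ℝ :=
  sSup ((fun t => ∑ a : Fin k, π a * Ht t (S a b) (S a b')) '' Set.Icc (0 : ℝ) 1)

/-- The phase-transition constant `C(π,S)`. -/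
def Cconst (π : Fin k → ℝ) (S : Matrix (Fin k) (Fin k) ℝ) : ℝ :=
  sInf {x : ℝ | ∃ b b' : Fin k, b ≠ b' ∧ x = CtMax π S b b'}

/-- `K_t(p‖q) = p^{1-t} q^t + t p log(p/q) - p`. -/
def Kt (t p q : ℝ) : ℝ := p ^ (1 - t) * q ^ t + t * p * Real.log (p / q) - p

/-- `K₁(p‖q) = p log(p/q) + q - p`. -/
def K1 (p q : ℝ) : ℝ := p * Real.log (p / q) + q - p

/-- Kullback–Leibler divergence between Bernoulli(s) and Bernoulli(t). -/
def KLBern (s t : ℝ) : ℝ := s * Real.log (s / t) + (1 - s) * Real.log ((1 - s) / (1 - t))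

/-- Off-diagonal pairs of labels. -/
def offDiag (k : ℕ) : Finset (Fin k × Fin k) :=
  Finset.univ.filter fun p => p.1 ≠ p.2

/-- `C_t(R,S) = Σ_a Σ_{b ≠ b'} [Rᵀ1]_a K_t(S_{ab}‖S_{ab'}) R_{b'b}`. -/
def CtRS (t : ℝ) (R S : Matrix (Fin k) (Fin k) ℝ) : ℝ :=
  ∑ a : Fin k, ∑ p ∈ offDiag k, colSum R a * Kt t (S a p.1) (S a p.2) * R p.2 p.1

/-- Membership in `F(n,α)`: all communities have size at least `α n`. -/
def inF (α : ℝ) (z : Fin n → Fin k) : Prop := ∀ a, α * n ≤ (nCount z a : ℝ)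

/-- `zh` is a maximizer of the ML modularity over `F(n,α)`. -/
def IsMLE (α : ℝ) (A : Fin n → Fin n → Bool) (zh : Fin n → Fin k) : Prop :=
  inF α zh ∧ ∀ e : Fin n → Fin k, inF α e → QML A e ≤ QML A zh

/-- `zh` is a maximizer of the ICL modularity over `F(n,α)`. -/
def IsICL (α : ℝ) (A : Fin n → Fin n → Bool) (zh : Fin n → Fin k) : Prop :=
  inF α zh ∧ ∀ e : Fin n → Fin k, inF α e → QICL A e ≤ QICL A zh

/-!
Counting each unordered pair of communities once, `Q_ML` becomes `(1/n²) ∑_{a ≤ b} ñ τ(õ/ñ)`;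
halving the diagonal counts is exact because `A` is symmetric with zero diagonal, so `õ = m` and
`ñ = m + M` for natural numbers with `m + M ≤ n²`. Then
`B(m + ½, M + ½) / B(½, ½) = (2m)! (2M)! / (4^(m+M) m! M! (m+M)!)`, and Stirling's formula with
the explicit remainder `log(2π)/2 ≤ log j! - (j log j - j + ½ log j) ≤ 1` shows that its logarithm
is within `½ log (m + M) + 1 ≤ log n + 1` of
`(m + M) τ(m/(m+M)) = m log m + M log M - (m+M) log (m+M)`.
There are at most `k²` pairs `a ≤ b`.
-/

open Real
open scoped Nat

def stirlingRem (j : ℕ) : ℝ := log j ! - (j * log j - j + log j / 2)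

@[simp]
lemma stirlingRem_zero : stirlingRem 0 = 0 := by simp [stirlingRem]

lemma log_two_pi_div_two_le_stirlingRem {j : ℕ} (hj : j ≠ 0) :
    log (2 * π) / 2 ≤ stirlingRem j := by
  have := Stirling.le_log_factorial_stirling hj
  rw [stirlingRem]; linarith

lemma stirlingRem_le_one {j : ℕ} (hj : j ≠ 0) : stirlingRem j ≤ 1 := by
  have hseq : Stirling.stirlingSeq j ≤ exp 1 / √2 := by
    obtain ⟨i, rfl⟩ := Nat.exists_eq_succ_of_ne_zero hj
    simpa using Stirling.stirlingSeq'_antitone (Nat.zero_le i)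
  have hlog : log (Stirling.stirlingSeq j) ≤ 1 - log 2 / 2 := by
    calc log (Stirling.stirlingSeq j) ≤ log (exp 1 / √2) :=
          log_le_log (Nat.succ_pred_eq_of_ne_zero hj ▸ Stirling.stirlingSeq'_pos _) hseq
      _ = 1 - log 2 / 2 := by
          rw [log_div (exp_ne_zero 1) (by positivity), log_exp, log_sqrt zero_le_two]
  have hj' : (j : ℝ) ≠ 0 := by exact_mod_cast hj
  rw [Stirling.log_stirlingSeq_formula, log_mul two_ne_zero hj', log_div hj' (exp_ne_zero 1),
    log_exp] at hlog
  rw [stirlingRem]; linarith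

lemma one_add_log_two_le_log_two_mul_pi : 1 + log 2 ≤ log (2 * π) := by
  rw [log_mul two_ne_zero pi_ne_zero, add_comm]
  gcongr
  rw [le_log_iff_exp_le pi_pos]
  linarith [exp_one_lt_d9, pi_gt_three]

lemma half_le_log_two : (1 : ℝ) / 2 ≤ log 2 := by linarith [log_two_gt_d9]

lemma Gamma_nat_add_half (m : ℕ) :
    Gamma (m + 1 / 2) = (2 * m)! * √π / (4 ^ m * m !) := by
  induction m with
  | zero => simpa using Gamma_one_half_eq
  | succ m ih =>
    rw [Nat.cast_succ, add_right_comm, Gamma_add_one (by positivity), ih,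
      show 2 * (m + 1) = (2 * m + 1) + 1 by ring, Nat.factorial_succ, Nat.factorial_succ,
      Nat.factorial_succ]
    field_simp
    push_cast
    ring

lemma Beta_nat_add_half_div_Beta_half (m M : ℕ) :
    Beta (m + 1 / 2) (M + 1 / 2) / Beta (1 / 2) (1 / 2)
      = (2 * m)! * (2 * M)! / (4 ^ (m + M) * m ! * M ! * (m + M)!) := by
  have hsum : (m + 1 / 2 : ℝ) + (M + 1 / 2) = ((m + M : ℕ) : ℝ) + 1 := by push_cast; ring
  rw [Beta, Beta, hsum, Gamma_nat_eq_factorial, add_halves, Gamma_one, Gamma_nat_add_half,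
    Gamma_nat_add_half, Gamma_one_half_eq]
  field_simp
  rw [pow_add]

lemma add_mul_tau_div_add (x y : ℝ) :
    (x + y) * tau (x / (x + y)) = x * log x + y * log y - (x + y) * log (x + y) := by
  rcases eq_or_ne (x + y) 0 with h | h
  · rw [eq_neg_of_add_eq_zero_right h, log_neg_eq_log]; simp
  have hmul_log_div : ∀ t : ℝ, t * log (t / (x + y)) = t * log t - t * log (x + y) := by
    intro t
    rcases eq_or_ne t 0 with rfl | ht
    · simp
    · rw [log_div ht h]; ring
  rw [tau, show 1 - x / (x + y) = y / (x + y) by field_simp; ring]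
  field_simp
  rw [hmul_log_div, hmul_log_div]
  ring

lemma log_factorial_eq (j : ℕ) : log j ! = j * log j - j + log j / 2 + stirlingRem j := by
  rw [stirlingRem]; ring

lemma log_Beta_ratio_sub_mul_tau (m M : ℕ) :
    log (Beta (m + 1 / 2) (M + 1 / 2) / Beta (1 / 2) (1 / 2)) - (m + M) * tau (m / (m + M))
      = (log (2 * m) + log (2 * M) - log m - log M - log (m + M)) / 2
        + (stirlingRem (2 * m) + stirlingRem (2 * M) - stirlingRem m - stirlingRem M
          - stirlingRem (m + M)) := by
  -- exact for all `m, M`, including `0`, because `log 0 = 0` and `stirlingRem 0 = 0`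
  have hmul_log_mul : ∀ j : ℝ, 2 * j * log (2 * j) = 2 * j * log 2 + 2 * j * log j := by
    intro j
    rcases eq_or_ne j 0 with rfl | hj
    · simp
    · rw [log_mul two_ne_zero hj]; ring
  rw [Beta_nat_add_half_div_Beta_half, add_mul_tau_div_add, log_div (by positivity) (by positivity),
    log_mul (by positivity) (by positivity), log_mul (by positivity) (by positivity),
    log_mul (by positivity) (by positivity), log_mul (by positivity) (by positivity), log_pow,
    show (4 : ℝ) = 2 ^ 2 by norm_num, log_pow, log_factorial_eq, log_factorial_eq, log_factorial_eq,
    log_factorial_eq, log_factorial_eq]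
  push_cast
  rw [hmul_log_mul, hmul_log_mul]
  ring

theorem abs_log_Beta_ratio_sub_mul_tau_le (m M : ℕ) :
    |log (Beta (m + 1 / 2) (M + 1 / 2) / Beta (1 / 2) (1 / 2)) - (m + M) * tau (m / (m + M))|
      ≤ log (m + M) / 2 + 1 := by
  rw [log_Beta_ratio_sub_mul_tau]
  have hπ := one_add_log_two_le_log_two_mul_pi
  have h2 := half_le_log_two
  have hlog_two_mul : ∀ {j : ℕ}, j ≠ 0 → log (2 * j) = log 2 + log j := fun hj =>
    log_mul two_ne_zero (by exact_mod_cast hj)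
  have hlog_nonneg : ∀ j : ℕ, 0 ≤ log j := fun j => log_natCast_nonneg j
  have hrem : ∀ {j : ℕ}, j ≠ 0 → log (2 * π) / 2 ≤ stirlingRem j ∧ stirlingRem j ≤ 1 :=
    fun hj => ⟨log_two_pi_div_two_le_stirlingRem hj, stirlingRem_le_one hj⟩
  rcases eq_or_ne m 0 with rfl | hm <;> rcases eq_or_ne M 0 with rfl | hM
  · simp
  · obtain ⟨_, _⟩ := hrem hM
    obtain ⟨_, _⟩ := hrem (mul_ne_zero two_ne_zero hM)
    simp only [CharP.cast_eq_zero, mul_zero, log_zero, zero_add, stirlingRem_zero]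
    rw [hlog_two_mul hM, abs_le]
    constructor <;> linarith [hlog_nonneg M]
  · obtain ⟨_, _⟩ := hrem hm
    obtain ⟨_, _⟩ := hrem (mul_ne_zero two_ne_zero hm)
    simp only [CharP.cast_eq_zero, mul_zero, log_zero, add_zero, stirlingRem_zero]
    rw [hlog_two_mul hm, abs_le]
    constructor <;> linarith [hlog_nonneg m]
  · obtain ⟨_, _⟩ := hrem hm
    obtain ⟨_, _⟩ := hrem hM
    obtain ⟨_, _⟩ := hrem (show m + M ≠ 0 by omega)
    obtain ⟨_, _⟩ := hrem (mul_ne_zero two_ne_zero hm)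
    obtain ⟨_, _⟩ := hrem (mul_ne_zero two_ne_zero hM)
    have hlogN : 0 ≤ log ((m : ℝ) + M) := by exact_mod_cast hlog_nonneg (m + M)
    rw [hlog_two_mul hm, hlog_two_mul hM, abs_le]
    constructor <;> linarith

lemma card_eq_two_mul_card_filter_lt {α : Type*} [LinearOrder α] {s : Finset (α × α)}
    (hswap : ∀ p ∈ s, p.swap ∈ s) (hne : ∀ p ∈ s, p.1 ≠ p.2) :
    #s = 2 * #(s.filter fun p => p.1 < p.2) := by
  have hgt : #(s.filter fun p => ¬ p.1 < p.2) = #(s.filter fun p => p.1 < p.2) := by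
    refine Finset.card_nbij' Prod.swap Prod.swap ?_ ?_ (fun _ _ => rfl) (fun _ _ => rfl)
    · intro p hp
      simp only [coe_filter, Set.mem_ofPred_eq, not_lt] at hp ⊢
      exact ⟨hswap p hp.1, lt_of_le_of_ne hp.2 (hne p hp.1).symm⟩
    · intro p hp
      simp only [coe_filter, Set.mem_ofPred_eq, not_lt] at hp ⊢
      exact ⟨hswap p hp.1, hp.2.le⟩
  rw [← Finset.card_filter_add_card_filter_not (fun p : α × α => p.1 < p.2), hgt, two_mul]

lemma sum_sum_eq_two_mul_sum_filter_le {ι R : Type*} [LinearOrder ι] [Fintype ι] [Semiring R]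
    {f g : ι → ι → R} (hf : ∀ a b, f a b = f b a) (hoff : ∀ a b, a ≠ b → f a b = g a b)
    (hdiag : ∀ a, f a a = 2 * g a a) :
    ∑ a, ∑ b, f a b = 2 * ∑ p ∈ univ.filter (fun p : ι × ι => p.1 ≤ p.2), g p.1 p.2 := by
  have hsplit : ∀ a b, f a b = (if a ≤ b then g a b else 0) + (if b ≤ a then g b a else 0) := by
    intro a b
    rcases lt_trichotomy a b with h | rfl | h
    · simp [h.le, h.not_ge, hoff a b h.ne]
    · simp [hdiag, two_mul]
    · simp [h.le, h.not_ge, hf a b, hoff b a h.ne]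
  rw [sum_filter, ← univ_product_univ, sum_product]
  simp_rw [hsplit, sum_add_distrib]
  rw [sum_comm (f := fun a b => if b ≤ a then g b a else 0), two_mul]

lemma mul_tau_div_half (x y : ℝ) : y * tau (x / y) = 2 * (y / 2 * tau (x / 2 / (y / 2))) := by
  rw [div_div_div_cancel_right₀ two_ne_zero]; ring

section Counting

variable (A : Fin n → Fin n → Bool) (z : Fin n → Fin k)

def edgesBetween (a b : Fin k) : Finset (Fin n × Fin n) :=
  univ.filter fun p => z p.1 = a ∧ z p.2 = b ∧ A p.1 p.2 = true

lemma oab_eq_card (a b : Fin k) : oab A z a b = #(edgesBetween A z a b) := by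
  rw [oab, ← Finset.sum_product', edgesBetween, Finset.card_filter, Nat.cast_sum]
  simp only [univ_product_univ]
  congr with p
  split_ifs <;> simp

lemma nab_self_eq_card_offDiag (a : Fin k) :
    nab z a a = #(univ.filter fun i => z i = a).offDiag := by
  rw [nab, if_pos rfl, offDiag_card, Nat.cast_sub (Nat.le_mul_self _), nCount]
  push_cast; ring

variable {A}

lemma oab_comm (hA : ValidAdj A) (a b : Fin k) : oab A z a b = oab A z b a := by
  rw [oab, Finset.sum_comm, oab]
  simp_rw [hA.1 _ _]
  congr! 3
  tauto

lemma nab_comm (a b : Fin k) : nab z a b = nab z b a := by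
  rcases eq_or_ne a b with rfl | h
  · rfl
  · rw [nab, nab, if_neg h, if_neg h.symm, mul_comm]

lemma exists_finset_otilde_ntilde (hA : ValidAdj A) (a b : Fin k) :
    ∃ P Q : Finset (Fin n × Fin n), Q ⊆ P ∧ otilde A z a b = #Q ∧ ntilde z a b = #P := by
  rcases eq_or_ne a b with rfl | hab
  · have hE : #(edgesBetween A z a a)
        = 2 * #((edgesBetween A z a a).filter fun p => p.1 < p.2) := by
      refine card_eq_two_mul_card_filter_lt (fun p hp => ?_) (fun p hp h => ?_) <;>
        simp only [edgesBetween, mem_filter, mem_univ, true_and] at hp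
      · simp [edgesBetween, hp.1, hp.2.1, hA.1 p.2 p.1, hp.2.2]
      · simp [h, hA.2] at hp
    have hS := card_eq_two_mul_card_filter_lt (s := (univ.filter fun i => z i = a).offDiag)
      (by simp +contextual [eq_comm]) (by simp)
    refine ⟨(univ.filter fun i => z i = a).offDiag.filter fun p => p.1 < p.2,
      (edgesBetween A z a a).filter fun p => p.1 < p.2, ?_, ?_, ?_⟩
    · intro p hp
      simp_all [edgesBetween, ne_of_lt]
    · rw [otilde, if_pos rfl, oab_eq_card, hE]; push_cast; ring
    · rw [ntilde, if_pos rfl, nab_self_eq_card_offDiag, hS]; push_cast; ring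
  · refine ⟨(univ.filter fun i => z i = a) ×ˢ (univ.filter fun i => z i = b),
      edgesBetween A z a b, ?_, ?_, ?_⟩
    · intro p hp
      simp_all [edgesBetween]
    · rw [otilde, if_neg hab, oab_eq_card]
    · rw [ntilde, if_neg hab, nab, if_neg hab, card_product]
      push_cast [nCount]; rfl

lemma QML_eq_sum_filter_le (hA : ValidAdj A) :
    QML A z = (1 / (n : ℝ) ^ 2) * ∑ p ∈ univ.filter (fun p : Fin k × Fin k => p.1 ≤ p.2),
      ntilde z p.1 p.2 * tau (otilde A z p.1 p.2 / ntilde z p.1 p.2) := by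
  rw [QML, sum_sum_eq_two_mul_sum_filter_le
    (g := fun a b => ntilde z a b * tau (otilde A z a b / ntilde z a b))
    (fun a b => by rw [nab_comm, oab_comm z hA])
    (fun a b h => by rw [ntilde, otilde, if_neg h, if_neg h])
    (fun a => by rw [ntilde, otilde, if_pos rfl, if_pos rfl]; exact mul_tau_div_half _ _)]
  ring

lemma exists_nat_otilde_ntilde (hA : ValidAdj A) (a b : Fin k) :
    ∃ m M : ℕ, otilde A z a b = m ∧ ntilde z a b = m + M ∧ m + M ≤ n ^ 2 := by
  obtain ⟨P, Q, hQP, hO, hN⟩ := exists_finset_otilde_ntilde z hA a b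
  have hQ := card_le_card hQP
  have hP : #P ≤ n ^ 2 := by simpa [sq] using card_le_univ P
  exact ⟨#Q, #P - #Q, hO, by rw [hN, ← Nat.cast_add, Nat.add_sub_cancel' hQ], by omega⟩

lemma abs_log_Beta_ratio_sub_ntilde_mul_tau_le (hA : ValidAdj A) (a b : Fin k) :
    |log (Beta (otilde A z a b + 1 / 2) (ntilde z a b - otilde A z a b + 1 / 2)
        / Beta (1 / 2) (1 / 2)) - ntilde z a b * tau (otilde A z a b / ntilde z a b)|
      ≤ log n + 1 := by
  obtain ⟨m, M, hO, hN, hle⟩ := exists_nat_otilde_ntilde z hA a b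
  rw [hO, hN, add_sub_cancel_left]
  refine (abs_log_Beta_ratio_sub_mul_tau_le m M).trans ?_
  have hlog : log ((m : ℝ) + M) ≤ 2 * log n := by
    rcases Nat.eq_zero_or_pos (m + M) with h | h
    · rw [← Nat.cast_add, h, Nat.cast_zero, log_zero]
      exact mul_nonneg zero_le_two (log_natCast_nonneg n)
    · rw [← Nat.cast_add, ← Nat.cast_two, ← log_pow]
      exact log_le_log (by exact_mod_cast h) (by exact_mod_cast hle)
  linarith

end Counting

theorem stmt0_general (n k : ℕ)
    (A : Fin n → Fin n → Bool) (hA : ValidAdj A) (e : Fin n → Fin k) :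
    |QICL A e - QML A e| ≤ (k : ℝ) ^ 2 * (Real.log n + 2) / (n : ℝ) ^ 2 := by
  set F := univ.filter fun p : Fin k × Fin k => p.1 ≤ p.2
  have hF : (#F : ℝ) ≤ k ^ 2 := by exact_mod_cast (card_filter_le _ _).trans (by simp [sq])
  rw [QICL, QML_eq_sum_filter_le e hA, ← mul_sub, ← sum_sub_distrib, abs_mul,
    abs_of_nonneg (by positivity), one_div_mul_eq_div]
  gcongr
  calc _ ≤ _ := abs_sum_le_sum_abs _ _
    _ ≤ #F • (log n + 2) := sum_le_card_nsmul _ _ _ fun p _ =>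
        (abs_log_Beta_ratio_sub_ntilde_mul_tau_le e hA p.1 p.2).trans (by linarith)
    _ ≤ k ^ 2 * (log n + 2) := by
        rw [nsmul_eq_mul]; gcongr

/-- the ML and ICL modularities differ by at most `k²(log n + 2)/n²`. -/
theorem stmt0 (n k : ℕ) (hn : 1 ≤ n) (hk : 1 ≤ k)
    (A : Fin n → Fin n → Bool) (hA : ValidAdj A) (e : Fin n → Fin k) :
    |QICL A e - QML A e| ≤ (k : ℝ) ^ 2 * (Real.log n + 2) / (n : ℝ) ^ 2 :=
  stmt0_general n k A hA e

end SBM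
end
end

section
/- For every real m ≥ 1, log( Γ(1/2) Γ(m+1) / Γ(m+1/2) ) ≤ (1/2) log m + 2. -/
open Finset Filter
open scoped Classical BigOperators Topology

noncomputable section

namespace SBM

variable {n k : ℕ}

/-- Gamma-ratio estimate. -/
theorem stmt1 (m : ℝ) (hm : 1 ≤ m) :
    Real.log (Real.Gamma (1 / 2) * Real.Gamma (m + 1) / Real.Gamma (m + 1 / 2)) ≤
      (1 / 2) * Real.log m + 2 := by
  have hm0 : (0:ℝ) < m := by linarith
  have hg1 : 0 < Real.Gamma (1/2 : ℝ) := Real.Gamma_pos_of_pos (by norm_num)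
  have hg2 : 0 < Real.Gamma (m + 1) := Real.Gamma_pos_of_pos (by linarith)
  have hg3 : 0 < Real.Gamma (m + 1/2) := Real.Gamma_pos_of_pos (by linarith)
  rw [Real.log_div (by positivity) (ne_of_gt hg3), Real.log_mul (ne_of_gt hg1) (ne_of_gt hg2)]
  -- convexity
  have hconv := Real.convexOn_log_Gamma.2 (Set.mem_Ioi.2 (show (0:ℝ) < m + 1/2 by linarith))
    (Set.mem_Ioi.2 (show (0:ℝ) < m + 3/2 by linarith))
    (by norm_num : (0:ℝ) ≤ 1/2) (by norm_num : (0:ℝ) ≤ 1/2) (by norm_num)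
  have hmid : (1/2 : ℝ) • (m + 1/2) + (1/2 : ℝ) • (m + 3/2) = m + 1 := by
    simp only [smul_eq_mul]; ring
  rw [hmid] at hconv
  simp only [Function.comp_apply, smul_eq_mul] at hconv
  have hrec : Real.Gamma (m + 3/2) = (m + 1/2) * Real.Gamma (m + 1/2) := by
    have := Real.Gamma_add_one (show (m + 1/2 : ℝ) ≠ 0 by positivity)
    rw [show m + 1/2 + 1 = m + 3/2 by ring] at this
    exact this
  rw [hrec, Real.log_mul (by positivity) (ne_of_gt hg3)] at hconv
  have key : Real.log (Real.Gamma (m+1)) - Real.log (Real.Gamma (m+1/2)) ≤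
      (1/2) * Real.log (m + 1/2) := by linarith
  have h1 : Real.log (Real.Gamma (1/2 : ℝ)) ≤ 1 := by
    rw [Real.Gamma_one_half_eq]
    have : Real.sqrt Real.pi ≤ 2 := by
      rw [show (2:ℝ) = Real.sqrt 4 by rw [show (4:ℝ) = 2^2 by norm_num, Real.sqrt_sq]; norm_num]
      exact Real.sqrt_le_sqrt (by linarith [Real.pi_le_four])
    calc Real.log (Real.sqrt Real.pi) ≤ Real.log 2 := by
          exact Real.log_le_log (Real.sqrt_pos.2 Real.pi_pos) this
      _ ≤ 1 := by linarith [Real.log_le_sub_one_of_pos (show (0:ℝ) < 2 by norm_num)]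
  have h2 : Real.log (m + 1/2) ≤ Real.log m + 1 := by
    calc Real.log (m + 1/2) ≤ Real.log (2 * m) :=
          Real.log_le_log (by linarith) (by linarith)
      _ = Real.log 2 + Real.log m := Real.log_mul (by norm_num) (ne_of_gt hm0)
      _ ≤ Real.log m + 1 := by linarith [Real.log_le_sub_one_of_pos (show (0:ℝ) < 2 by norm_num)]
  linarith

end SBM
end
end

section
/- Let S be a symmetric k×k matrix with strictly positive entries and no two identical columns. Let R be a k×k matrix with nonnegative entries summing to 1 such that every column of R is nonzero and such that D_σ R is not a diagonal matrix for any k×k permutation matrix D_σ. Then G_S(Diag(Rᵀ1)) − G_S(R) > 0, where G_S(R) = Σ_{1≤a,b≤k} [RSRᵀ]_{ab} log( [RSRᵀ]_{ab} / ([R1]_a [R1]_b) ) with the convention that terms with [RSRᵀ]_{ab} = 0 are 0. -/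
/-!
Write `r_a = ∑ⱼ R_aj` and `X_ab = ∑ᵢⱼ R_ai R_bj S_ij`, so that
`G_S(R) = ∑_ab X_ab log (X_ab / (r_a r_b))` and `G_S(Diag(Rᵀ1)) = ∑_ab ∑ᵢⱼ R_ai R_bj S_ij log S_ij`.
Block by block, these are the two sides of the log-sum inequality (Jensen for `x ↦ x log x` with
the weights `R_ai R_bj`, of total mass `r_a r_b`), so the gap is nonnegative. It is strict on some
block: were there at most one nonzero entry per row of `R`, the nonzero entries, one per column,
would sit on a permutation. So some row `a` has `R_aj, R_aj' ≠ 0` with `j ≠ j'`; the columns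
`j, j'` of `S` differ in some row `i`; and for `b` with `R_bi ≠ 0` the block `(b, a)` weighs the two
different values `S_ij` and `S_ij'`.
-/

open Finset Filter
open scoped Classical BigOperators Topology

noncomputable section

namespace SBM

variable {n k : ℕ}

section LogSum

variable {ι : Type*} {t : Finset ι} {w s : ι → ℝ}

lemma sum_div_sum_smul (f : ι → ℝ) :
    ∑ i ∈ t, (w i / ∑ j ∈ t, w j) • f i = (∑ i ∈ t, w i * f i) / ∑ i ∈ t, w i := by
  simp only [smul_eq_mul, div_mul_eq_mul_div, sum_div]

/-- The log-sum inequality, as Jensen's inequality for the convex function `x ↦ x log x`. -/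
lemma sum_mul_log_div_sum_le (hw : ∀ i ∈ t, 0 ≤ w i) (hs : ∀ i ∈ t, 0 ≤ s i) :
    (∑ i ∈ t, w i * s i) * Real.log ((∑ i ∈ t, w i * s i) / ∑ i ∈ t, w i) ≤
      ∑ i ∈ t, w i * (s i * Real.log (s i)) := by
  rcases (sum_nonneg hw).eq_or_lt with hW | hW
  · have hw0 : ∀ i ∈ t, w i = 0 := (sum_eq_zero_iff_of_nonneg hw).1 hW.symm
    have hzero (f : ι → ℝ) : ∑ i ∈ t, w i * f i = 0 :=
      sum_eq_zero fun i hi => by rw [hw0 i hi, zero_mul]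
    simp [hzero]
  have hjensen := Real.convexOn_mul_log.map_sum_le (fun i hi => div_nonneg (hw i hi) hW.le)
    (by rw [← sum_div, div_self hW.ne']) hs
  rw [sum_div_sum_smul, sum_div_sum_smul, div_mul_eq_mul_div] at hjensen
  exact (div_le_div_iff_of_pos_right hW).1 hjensen

lemma sum_mul_log_div_sum_lt (hw : ∀ i ∈ t, 0 ≤ w i) (hs : ∀ i ∈ t, 0 ≤ s i)
    (hne : ∃ i ∈ t, ∃ j ∈ t, w i ≠ 0 ∧ w j ≠ 0 ∧ s i ≠ s j) :
    (∑ i ∈ t, w i * s i) * Real.log ((∑ i ∈ t, w i * s i) / ∑ i ∈ t, w i) <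
      ∑ i ∈ t, w i * (s i * Real.log (s i)) := by
  obtain ⟨i, hi, j, hj, hwi, hwj, hsij⟩ := hne
  have hW : 0 < ∑ i ∈ t, w i :=
    lt_of_lt_of_le ((hw i hi).lt_of_ne' hwi) (single_le_sum hw hi)
  have hjensen := (Real.strictConvexOn_mul_log.map_sum_lt_iff_of_nonneg
    (fun i hi => div_nonneg (hw i hi) hW.le) (by rw [← sum_div, div_self hW.ne']) hs).2
    ⟨i, hi, j, hj, div_ne_zero hwi hW.ne', div_ne_zero hwj hW.ne', hsij⟩
  rw [sum_div_sum_smul, sum_div_sum_smul, div_mul_eq_mul_div] at hjensen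
  exact (div_lt_div_iff_of_pos_right hW).1 hjensen

end LogSum

lemma _root_.Matrix.exists_row_two_ne_zero {ι M : Type*} [Finite ι] [Zero M] {R : Matrix ι ι M}
    (hcol : ∀ j, ∃ i, R i j ≠ 0) (hnotdiag : ∀ σ : Equiv.Perm ι, ∃ a b, a ≠ b ∧ R (σ a) b ≠ 0) :
    ∃ i j j', j ≠ j' ∧ R i j ≠ 0 ∧ R i j' ≠ 0 := by
  by_contra! hrow
  choose σ hσ using hcol
  have hinj : Function.Injective σ := fun j j' hjj' => by
    by_contra hne
    exact hσ j' (hjj' ▸ hrow (σ j) j j' hne (hσ j))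
  obtain ⟨a, b, hab, hRab⟩ := hnotdiag (Equiv.ofBijective σ (Finite.injective_iff_bijective.1 hinj))
  exact hRab (hrow (σ a) a b hab (hσ a))

lemma _root_.Matrix.mul_mul_transpose_apply {ι α : Type*} [Fintype ι] [CommSemiring α]
    (R S : Matrix ι ι α) (a b : ι) :
    (R * S * R.transpose) a b = ∑ p : ι × ι, R a p.1 * R b p.2 * S p.1 p.2 := by
  simp only [Matrix.mul_apply, Matrix.transpose_apply, sum_mul, Fintype.sum_prod_type]
  rw [sum_comm]
  exact sum_congr rfl fun i _ => sum_congr rfl fun j _ => by ring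

lemma rowSum_mul_rowSum (R : Matrix (Fin k) (Fin k) ℝ) (a b : Fin k) :
    rowSum R a * rowSum R b = ∑ p : Fin k × Fin k, R a p.1 * R b p.2 := by
  rw [rowSum, rowSum, sum_mul_sum, Fintype.sum_prod_type]

lemma GS_eq_sum_blocks (S R : Matrix (Fin k) (Fin k) ℝ) :
    GS S R = ∑ a, ∑ b,
      (∑ p : Fin k × Fin k, R a p.1 * R b p.2 * S p.1 p.2) *
        Real.log ((∑ p : Fin k × Fin k, R a p.1 * R b p.2 * S p.1 p.2) /
          ∑ p : Fin k × Fin k, R a p.1 * R b p.2) := by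
  simp only [GS, Matrix.mul_mul_transpose_apply, rowSum_mul_rowSum]

/-- Terms with `c i * c j = 0` vanish on both sides. -/
lemma GS_diagonal (S : Matrix (Fin k) (Fin k) ℝ) (c : Fin k → ℝ) :
    GS S (Matrix.diagonal c) = ∑ i, ∑ j, c i * c j * (S i j * Real.log (S i j)) := by
  have hrow (a : Fin k) : rowSum (Matrix.diagonal c) a = c a := by
    simp [rowSum, Matrix.diagonal_apply]
  refine sum_congr rfl fun i _ => sum_congr rfl fun j _ => ?_
  rw [Matrix.diagonal_transpose, Matrix.mul_diagonal, Matrix.diagonal_mul, hrow, hrow,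
    show c i * S i j * c j = S i j * (c i * c j) by ring]
  rcases eq_or_ne (c i * c j) 0 with hc | hc
  · simp [hc]
  · rw [mul_div_cancel_right₀ _ hc]
    ring

lemma GS_diagonal_colSum (S R : Matrix (Fin k) (Fin k) ℝ) :
    GS S (Matrix.diagonal (colSum R)) = ∑ a, ∑ b,
      ∑ p : Fin k × Fin k, R a p.1 * R b p.2 * (S p.1 p.2 * Real.log (S p.1 p.2)) := by
  rw [GS_diagonal, ← Fintype.sum_prod_type']
  simp only [colSum, sum_mul_sum]
  simp only [sum_mul]
  rw [sum_comm]
  exact sum_congr rfl fun _ _ => sum_comm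

theorem stmt9_general (k : ℕ) (S : Matrix (Fin k) (Fin k) ℝ)
    (hSpos : ∀ a b, 0 < S a b)
    (hcols : ∀ b b' : Fin k, b ≠ b' → ∃ a, S a b ≠ S a b')
    (R : Matrix (Fin k) (Fin k) ℝ) (hR0 : ∀ a b, 0 ≤ R a b)
    (hcolnz : ∀ b, ∃ a, R a b ≠ 0)
    (hnotdiag : ∀ σ : Equiv.Perm (Fin k), ∃ a b, a ≠ b ∧ R (σ a) b ≠ 0) :
    0 < GS S (Matrix.diagonal fun a => colSum R a) - GS S R := by
  have hw (a b : Fin k) : ∀ p ∈ (univ : Finset (Fin k × Fin k)), 0 ≤ R a p.1 * R b p.2 :=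
    fun p _ => mul_nonneg (hR0 a p.1) (hR0 b p.2)
  have hS : ∀ p ∈ (univ : Finset (Fin k × Fin k)), 0 ≤ S p.1 p.2 := fun p _ => (hSpos p.1 p.2).le
  obtain ⟨a, j, j', hjj', hj, hj'⟩ := R.exists_row_two_ne_zero hcolnz hnotdiag
  obtain ⟨i, hi⟩ := hcols j j' hjj'
  obtain ⟨b, hb⟩ := hcolnz i
  have hstrict := sum_mul_log_div_sum_lt (hw b a) hS
    ⟨(i, j), mem_univ _, (i, j'), mem_univ _, mul_ne_zero hb hj, mul_ne_zero hb hj', hi⟩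
  rw [sub_pos, GS_eq_sum_blocks, GS_diagonal_colSum]
  exact sum_lt_sum (fun c _ => sum_le_sum fun d _ => sum_mul_log_div_sum_le (hw c d) hS)
    ⟨b, mem_univ b, sum_lt_sum (fun d _ => sum_mul_log_div_sum_le (hw b d) hS)
      ⟨a, mem_univ a, hstrict⟩⟩

/-- strict positivity of the population criterion gap. -/
theorem stmt9 (k : ℕ) (S : Matrix (Fin k) (Fin k) ℝ) (hSsym : S.IsSymm)
    (hSpos : ∀ a b, 0 < S a b)
    (hcols : ∀ b b' : Fin k, b ≠ b' → ∃ a, S a b ≠ S a b')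
    (R : Matrix (Fin k) (Fin k) ℝ) (hR0 : ∀ a b, 0 ≤ R a b)
    (hRsum : ∑ a : Fin k, ∑ b : Fin k, R a b = 1)
    (hcolnz : ∀ b, ∃ a, R a b ≠ 0)
    (hnotdiag : ∀ σ : Equiv.Perm (Fin k), ∃ a b, a ≠ b ∧ R (σ a) b ≠ 0) :
    0 < GS S (Matrix.diagonal fun a => colSum R a) - GS S R :=
  stmt9_general k S hSpos hcols R hR0 hcolnz hnotdiag
end SBM
end
end

section
/- Let (Z,A) be generated from SBM(n,k,π,ρ_n S) with nρ_n → ∞ and ρ_n s_max ≤ 1/2, and fix α > 0 and 0 < δ < s_min/2. Then P( for all a,b ∈ [k] and all e ∈ F(n,α): o_{ab}(e)/(ρ_n n_{ab}(e)) ∈ (s_min − δ, s_max + δ) ) → 1 as n → ∞. -/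
/-!
Conditionally on the labels `z`, the edges above the diagonal are independent Bernoulli
variables with parameters in `[ρ s_min, ρ s_max]`. For fixed `e`, `a`, `b`, the ratio
`o_ab(e) / n_ab(e)` is the fraction of present edges among the pairs joining classes `a` and
`b` of `e`, and there are at least `(α n)² / 4` such pairs. An exponential Chernoff bound keeps
this fraction in `(ρ (s_min - δ), ρ (s_max + δ))` up to probability `2 exp(-c ρ n²)`, which
survives the union bound over the `k^(n+2)` triples `(e, a, b)` because `n ρ → ∞`.
-/

open Finset Filter
open scoped Classical BigOperators Topology

noncomputable section

namespace SBM

variable {n k : ℕ}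

section BernoulliProduct

variable {ι : Type*} [Fintype ι]

def bernoulliWeight (w : ι → ℝ) (B : ι → Bool) : ℝ := ∏ l, if B l then w l else 1 - w l

def bernoulliProb (w : ι → ℝ) (E : (ι → Bool) → Prop) : ℝ := ∑ B with E B, bernoulliWeight w B

def trueCount (T : Finset ι) (B : ι → Bool) : ℝ := ∑ l ∈ T, if B l then 1 else 0

variable {w : ι → ℝ}

lemma bernoulliWeight_nonneg (hw : ∀ l, w l ∈ Set.Icc 0 1) (B : ι → Bool) :
    0 ≤ bernoulliWeight w B :=
  prod_nonneg fun l _ => by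
    split_ifs
    · exact (hw l).1
    · exact sub_nonneg.2 (hw l).2

lemma sum_bernoulliWeight (w : ι → ℝ) : ∑ B, bernoulliWeight w B = 1 := by
  simp only [bernoulliWeight]
  rw [← Fintype.prod_sum fun l (b : Bool) => if b then w l else 1 - w l]
  simp

lemma bernoulliProb_nonneg (hw : ∀ l, w l ∈ Set.Icc 0 1) (E : (ι → Bool) → Prop) :
    0 ≤ bernoulliProb w E :=
  sum_nonneg fun B _ => bernoulliWeight_nonneg hw B

lemma bernoulliProb_add_compl (w : ι → ℝ) (E : (ι → Bool) → Prop) :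
    bernoulliProb w E + bernoulliProb w (fun B => ¬ E B) = 1 := by
  rw [bernoulliProb, bernoulliProb, sum_filter_add_sum_filter_not, sum_bernoulliWeight]

lemma bernoulliProb_mono (hw : ∀ l, w l ∈ Set.Icc 0 1) {E F : (ι → Bool) → Prop}
    (h : ∀ B, E B → F B) : bernoulliProb w E ≤ bernoulliProb w F :=
  sum_le_sum_of_subset_of_nonneg (monotone_filter_right _ fun B _ => h B)
    fun B _ _ => bernoulliWeight_nonneg hw B

lemma bernoulliProb_or_le (hw : ∀ l, w l ∈ Set.Icc 0 1) (E F : (ι → Bool) → Prop) :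
    bernoulliProb w (fun B => E B ∨ F B) ≤ bernoulliProb w E + bernoulliProb w F := by
  simp only [bernoulliProb, sum_filter, ← sum_add_distrib]
  gcongr with B
  have := bernoulliWeight_nonneg hw B
  split_ifs <;> simp_all

lemma bernoulliProb_exists_le (hw : ∀ l, w l ∈ Set.Icc 0 1) {κ : Type*} [Fintype κ]
    (E : κ → (ι → Bool) → Prop) :
    bernoulliProb w (fun B => ∃ i, E i B) ≤ ∑ i, bernoulliProb w (E i) := by
  simp only [bernoulliProb, sum_filter]
  rw [sum_comm]
  gcongr with B
  split_ifs with h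
  · obtain ⟨i, hi⟩ := h
    refine le_of_eq_of_le (if_pos hi).symm
      (single_le_sum (f := fun j => ite (E j B) _ 0) ?_ (mem_univ i))
    intro j _
    split_ifs
    exacts [bernoulliWeight_nonneg hw B, le_rfl]
  · exact sum_nonneg fun j _ => by split_ifs <;> simp [bernoulliWeight_nonneg hw B]

lemma sum_bernoulliWeight_mul_exp (w : ι → ℝ) (T : Finset ι) (t : ℝ) :
    ∑ B, bernoulliWeight w B * Real.exp (t * trueCount T B)
      = ∏ l ∈ T, (1 - w l + w l * Real.exp t) := by
  have factor : ∀ B : ι → Bool, bernoulliWeight w B * Real.exp (t * trueCount T B)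
      = ∏ l, (if B l then w l else 1 - w l) *
          (if l ∈ T then Real.exp (t * if B l then 1 else 0) else 1) := by
    intro B
    rw [prod_mul_distrib, Fintype.prod_ite_mem, trueCount, mul_sum, Real.exp_sum, bernoulliWeight]
  simp_rw [factor]
  rw [← Fintype.prod_sum (fun l (b : Bool) => (if b then w l else 1 - w l) *
      (if l ∈ T then Real.exp (t * if b then 1 else 0) else 1)),
    ← Fintype.prod_ite_mem T fun l => 1 - w l + w l * Real.exp t]
  refine prod_congr rfl fun l _ => ?_
  split_ifs
  · simp only [Fintype.sum_bool, ↓reduceIte, Bool.false_eq_true, mul_one, mul_zero, Real.exp_zero]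
    ring
  · simp

lemma bernoulliProb_le_exp (hw : ∀ l, w l ∈ Set.Icc 0 1) (T : Finset ι) (t x : ℝ) :
    bernoulliProb w (fun B => t * x ≤ t * trueCount T B)
      ≤ Real.exp ((∑ l ∈ T, w l) * (Real.exp t - 1) - t * x) := by
  have markov : bernoulliProb w (fun B => t * x ≤ t * trueCount T B)
      ≤ ∑ B, bernoulliWeight w B * (Real.exp (-(t * x)) * Real.exp (t * trueCount T B)) := by
    rw [bernoulliProb, sum_filter]
    gcongr with B
    have := bernoulliWeight_nonneg hw B
    rw [← Real.exp_add]
    split_ifs with h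
    · exact le_mul_of_one_le_right this (Real.one_le_exp (by linarith))
    · positivity
  have mgf_le : ∏ l ∈ T, (1 - w l + w l * Real.exp t)
      ≤ ∏ l ∈ T, Real.exp (w l * (Real.exp t - 1)) := by
    refine prod_le_prod (fun l _ => ?_) (fun l _ => ?_)
    · nlinarith [Real.exp_pos t, (hw l).1, (hw l).2]
    · linarith [Real.add_one_le_exp (w l * (Real.exp t - 1))]
  calc bernoulliProb w (fun B => t * x ≤ t * trueCount T B)
      ≤ Real.exp (-(t * x)) * ∏ l ∈ T, (1 - w l + w l * Real.exp t) := by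
        rw [← sum_bernoulliWeight_mul_exp, mul_sum]
        simpa only [mul_left_comm] using markov
    _ ≤ Real.exp (-(t * x)) * ∏ l ∈ T, Real.exp (w l * (Real.exp t - 1)) := by gcongr
    _ = Real.exp ((∑ l ∈ T, w l) * (Real.exp t - 1) - t * x) := by
        rw [← Real.exp_sum, ← Real.exp_add, sum_mul, neg_add_eq_sub]

lemma exp_sub_one_le_add_sq {s : ℝ} (hs : |s| ≤ 1) : Real.exp s - 1 ≤ s + s ^ 2 := by
  linarith [(abs_le.1 (Real.abs_exp_sub_one_sub_id_le hs)).2]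

lemma bernoulliProb_div_not_mem_Ioo_le (hw : ∀ l, w l ∈ Set.Icc 0 1) {T : Finset ι}
    {ρ smin smax δ t : ℝ} (hρm : 0 < ρ * #T)
    (hlo : ∀ l ∈ T, ρ * smin ≤ w l) (hhi : ∀ l ∈ T, w l ≤ ρ * smax)
    (ht0 : 0 ≤ t) (ht1 : t ≤ 1) (htδ : t * smax ≤ δ / 2) :
    bernoulliProb w (fun B => trueCount T B / (ρ * #T) ∉ Set.Ioo (smin - δ) (smax + δ))
      ≤ 2 * Real.exp (-(t * δ / 2) * (ρ * #T)) := by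
  set m : ℝ := ρ * #T
  set μ := ∑ l ∈ T, w l
  have hμlo : smin * m ≤ μ := by
    have := card_nsmul_le_sum T w _ hlo
    rw [nsmul_eq_mul] at this
    linarith
  have hμhi : μ ≤ smax * m := by
    have := sum_le_card_nsmul T w _ hhi
    rw [nsmul_eq_mul] at this
    linarith
  have hμ0 : 0 ≤ μ := sum_nonneg fun l _ => (hw l).1
  have hquad : t * t * smax * m ≤ t * (δ / 2) * m := by
    have := mul_le_mul_of_nonneg_left htδ ht0
    nlinarith
  have tails : ∀ B, trueCount T B / m ∉ Set.Ioo (smin - δ) (smax + δ) →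
      t * ((smax + δ) * m) ≤ t * trueCount T B
        ∨ -t * ((smin - δ) * m) ≤ -t * trueCount T B := by
    intro B hB
    rw [Set.mem_Ioo, not_and_or, not_lt, not_lt, div_le_iff₀ hρm, le_div_iff₀ hρm] at hB
    rcases hB with hB | hB
    · exact Or.inr (by nlinarith)
    · exact Or.inl (by nlinarith)
  have upper : μ * (Real.exp t - 1) - t * ((smax + δ) * m) ≤ -(t * δ / 2) * m := by
    have := exp_sub_one_le_add_sq (s := t) (by rw [abs_of_nonneg ht0]; exact ht1)
    nlinarith [mul_le_mul_of_nonneg_left this hμ0]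
  have lower : μ * (Real.exp (-t) - 1) - -t * ((smin - δ) * m) ≤ -(t * δ / 2) * m := by
    have := exp_sub_one_le_add_sq (s := -t) (by rw [abs_neg, abs_of_nonneg ht0]; exact ht1)
    nlinarith [mul_le_mul_of_nonneg_left this hμ0]
  calc bernoulliProb w (fun B => trueCount T B / m ∉ Set.Ioo (smin - δ) (smax + δ))
      ≤ bernoulliProb w (fun B => t * ((smax + δ) * m) ≤ t * trueCount T B)
        + bernoulliProb w (fun B => -t * ((smin - δ) * m) ≤ -t * trueCount T B) :=
        (bernoulliProb_mono hw tails).trans (bernoulliProb_or_le hw _ _)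
    _ ≤ Real.exp (-(t * δ / 2) * m) + Real.exp (-(t * δ / 2) * m) := by
        gcongr
        · exact (bernoulliProb_le_exp hw T _ _).trans (Real.exp_le_exp.2 upper)
        · exact (bernoulliProb_le_exp hw T _ _).trans (Real.exp_le_exp.2 lower)
    _ = 2 * Real.exp (-(t * δ / 2) * m) := by ring

end BernoulliProduct

-- The independent edge variables of the model are indexed by the pairs `i < j`.
abbrev IncPair (n : ℕ) := {p : Fin n × Fin n // p.1 < p.2}

def symAdj (B : IncPair n → Bool) : Fin n → Fin n → Bool := fun i j =>
  if h : i < j then B ⟨(i, j), h⟩ else if h : j < i then B ⟨(j, i), h⟩ else false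

def restrictAdj (A : Fin n → Fin n → Bool) : IncPair n → Bool := fun l => A l.1.1 l.1.2

lemma symAdj_apply (B : IncPair n → Bool) (l : IncPair n) : symAdj B l.1.1 l.1.2 = B l := by
  simp [symAdj, l.2]

lemma symAdj_apply_swap (B : IncPair n → Bool) (l : IncPair n) :
    symAdj B l.1.2 l.1.1 = B l := by
  simp [symAdj, l.2, not_lt_of_gt l.2]

lemma validAdj_symAdj (B : IncPair n → Bool) : ValidAdj (symAdj B) := by
  refine ⟨fun i j => ?_, fun i => by simp [symAdj]⟩
  rcases lt_trichotomy i j with h | rfl | h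
  · simp [symAdj, h, not_lt_of_gt h]
  · rfl
  · simp [symAdj, h, not_lt_of_gt h]

lemma restrictAdj_symAdj (B : IncPair n → Bool) : restrictAdj (symAdj B) = B :=
  funext (symAdj_apply B)

lemma symAdj_restrictAdj {A : Fin n → Fin n → Bool} (hA : ValidAdj A) :
    symAdj (restrictAdj A) = A := by
  funext i j
  rcases lt_trichotomy i j with h | rfl | h
  · simp [symAdj, restrictAdj, h]
  · simp [symAdj, hA.2]
  · simp [symAdj, restrictAdj, h, not_lt_of_gt h, hA.1 i j]

def edgeProb (ρ : ℝ) (S : Matrix (Fin k) (Fin k) ℝ) (z : Fin n → Fin k) (l : IncPair n) : ℝ :=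
  ρ * S (z l.1.1) (z l.1.2)

lemma edgeDensity_eq_bernoulliWeight (ρ : ℝ) (S : Matrix (Fin k) (Fin k) ℝ)
    (z : Fin n → Fin k) (A : Fin n → Fin n → Bool) :
    edgeDensity ρ S z A = bernoulliWeight (edgeProb ρ S z) (restrictAdj A) :=
  prod_subtype _ (fun _ => by simp) _

lemma condProb_eq_bernoulliProb (ρ : ℝ) (S : Matrix (Fin k) (Fin k) ℝ) (z : Fin n → Fin k)
    (E : (Fin n → Fin n → Bool) → Prop) :
    condProb ρ S z E = bernoulliProb (edgeProb ρ S z) (fun B => E (symAdj B)) := by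
  rw [condProb, bernoulliProb, ← sum_filter]
  refine sum_nbij' restrictAdj symAdj (fun A hA => ?_) (fun B hB => ?_) (fun A hA => ?_)
    (fun B _ => restrictAdj_symAdj B) (fun A _ => edgeDensity_eq_bernoulliWeight ρ S z A)
  · simp only [mem_filter, mem_univ, true_and] at hA ⊢
    rw [symAdj_restrictAdj hA.1]
    exact hA.2
  · simp only [mem_filter, mem_univ, true_and] at hB ⊢
    exact ⟨validAdj_symAdj B, hB⟩
  · exact symAdj_restrictAdj (mem_filter.1 hA).2.1

lemma sum_sum_eq_sum_incPair {M : Type*} [AddCommMonoid M] (f : Fin n → Fin n → M)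
    (hf : ∀ i, f i i = 0) :
    ∑ i, ∑ j, f i j = ∑ l : IncPair n, (f l.1.1 l.1.2 + f l.1.2 l.1.1) := by
  have split : ∀ i j, f i j = (if i < j then f i j else 0) + if j < i then f i j else 0 := by
    intro i j
    rcases lt_trichotomy i j with h | rfl | h
    · simp [h, not_lt_of_gt h]
    · simp [hf]
    · simp [h, not_lt_of_gt h]
  calc ∑ i, ∑ j, f i j
      = ∑ i, ∑ j, (if i < j then f i j else 0) + ∑ i, ∑ j, if j < i then f i j else 0 := by
        simp_rw [← sum_add_distrib, ← split]
    _ = ∑ p : Fin n × Fin n, if p.1 < p.2 then f p.1 p.2 + f p.2 p.1 else 0 := by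
        rw [sum_comm (f := fun i j => if j < i then f i j else 0), ← sum_add_distrib,
          Fintype.sum_prod_type]
        simp_rw [← sum_add_distrib, ← ite_add_zero]
    _ = ∑ l : IncPair n, (f l.1.1 l.1.2 + f l.1.2 l.1.1) := by
        rw [← sum_filter]
        exact sum_subtype _ (by simp) _

lemma nab_eq_sum (e : Fin n → Fin k) (a b : Fin k) :
    nab e a b = ∑ i, ∑ j, if i ≠ j ∧ e i = a ∧ e j = b then (1 : ℝ) else 0 := by
  have diag : ∀ i j, (if i ≠ j ∧ e i = a ∧ e j = b then (1 : ℝ) else 0)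
      = (if e i = a then 1 else 0) * (if e j = b then 1 else 0)
        - if i = j ∧ e i = a ∧ e i = b then 1 else 0 := by
    intro i j
    split_ifs <;> grind
  simp_rw [diag, sum_sub_distrib, ← mul_sum, ← sum_mul, ite_and, sum_ite_eq, sum_boole]
  simp only [mem_univ, ← ite_and, true_and, sum_boole, nab, nCount]
  split_ifs with hab
  · subst hab
    simp only [and_self]
    ring
  · have : ∀ x, ¬(e x = a ∧ e x = b) := fun x h => hab (h.1.symm.trans h.2)
    simp [this]

def pairClass (e : Fin n → Fin k) (a b : Fin k) : Finset (IncPair n) :=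
  {l | (e l.1.1 = a ∧ e l.1.2 = b) ∨ (e l.1.1 = b ∧ e l.1.2 = a)}

lemma ite_add_ite_swap (x y a b : Fin k) :
    ((if x = a ∧ y = b then 1 else 0) + (if y = a ∧ x = b then 1 else 0) : ℝ)
      = (if a = b then 2 else 1) * if (x = a ∧ y = b) ∨ (x = b ∧ y = a) then 1 else 0 := by
  split_ifs <;> grind

lemma nab_eq_mul_card (e : Fin n → Fin k) (a b : Fin k) :
    nab e a b = (if a = b then 2 else 1) * #(pairClass e a b) := by
  rw [nab_eq_sum, sum_sum_eq_sum_incPair _ (by simp), pairClass, ← sum_boole, mul_sum]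
  refine sum_congr rfl fun l _ => ?_
  simp only [ne_of_lt l.2, ne_of_gt l.2, ne_eq, not_false_eq_true, true_and]
  exact ite_add_ite_swap _ _ a b

lemma oab_symAdj (B : IncPair n → Bool) (e : Fin n → Fin k) (a b : Fin k) :
    oab (symAdj B) e a b = (if a = b then 2 else 1) * trueCount (pairClass e a b) B := by
  rw [oab, sum_sum_eq_sum_incPair _ (by simp [symAdj]), trueCount, pairClass, sum_filter,
    mul_sum]
  refine sum_congr rfl fun l _ => ?_
  rw [symAdj_apply, symAdj_apply_swap]
  cases B l
  · simp
  · simpa using ite_add_ite_swap _ _ a b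

lemma oab_symAdj_div (B : IncPair n → Bool) (e : Fin n → Fin k) (a b : Fin k) (ρ : ℝ) :
    oab (symAdj B) e a b / (ρ * nab e a b)
      = trueCount (pairClass e a b) B / (ρ * #(pairClass e a b)) := by
  rw [oab_symAdj, nab_eq_mul_card, mul_left_comm]
  exact mul_div_mul_left _ _ (by split_ifs <;> norm_num)

-- For `a = b`, `n_aa = n_a (n_a - 1) ≥ n_a² / 2` once `n_a ≥ 2`; hence the `/ 4`.
lemma card_pairClass_ge {α : ℝ} {e : Fin n → Fin k} (he : inF α e) (hn : 2 ≤ α * n)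
    (a b : Fin k) : (α * n) ^ 2 / 4 ≤ #(pairClass e a b) := by
  have h := nab_eq_mul_card e a b
  have ha := he a
  have hb := he b
  rw [nab] at h
  split_ifs at h with hab
  · subst hab
    nlinarith
  · nlinarith

lemma le_sMax (S : Matrix (Fin k) (Fin k) ℝ) (a b : Fin k) : S a b ≤ sMax S :=
  le_csSup (Set.finite_range _).bddAbove ⟨(a, b), rfl⟩

lemma sMin_le (S : Matrix (Fin k) (Fin k) ℝ) (a b : Fin k) : sMin S ≤ S a b :=
  csInf_le (Set.finite_range _).bddBelow ⟨(a, b), rfl⟩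

section EdgeModel

variable {ρ smin smax δ t α : ℝ} {S : Matrix (Fin k) (Fin k) ℝ} {z : Fin n → Fin k}

lemma edgeProb_mem_Icc (hρ : 0 ≤ ρ) (hS0 : ∀ a b, 0 ≤ S a b) (hS1 : ∀ a b, ρ * S a b ≤ 1)
    (l : IncPair n) : edgeProb ρ S z l ∈ Set.Icc 0 1 :=
  ⟨mul_nonneg hρ (hS0 _ _), hS1 _ _⟩

lemma condProb_mem_Icc_of_compl_le (hw : ∀ l, edgeProb ρ S z l ∈ Set.Icc 0 1)
    {E : (Fin n → Fin n → Bool) → Prop} {ε : ℝ} (h : condProb ρ S z (fun A => ¬ E A) ≤ ε) :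
    condProb ρ S z E ∈ Set.Icc (1 - ε) 1 := by
  rw [condProb_eq_bernoulliProb] at h ⊢
  have hsum := bernoulliProb_add_compl (edgeProb ρ S z) (fun B => E (symAdj B))
  have := bernoulliProb_nonneg hw (fun B => ¬ E (symAdj B))
  constructor <;> linarith

lemma bernoulliProb_inF_ratio_not_mem_Ioo_le (hw : ∀ l, edgeProb ρ S z l ∈ Set.Icc 0 1)
    (hS : ∀ a b, S a b ∈ Set.Icc smin smax) (hρ : 0 < ρ) (hδ : 0 ≤ δ)
    (ht0 : 0 ≤ t) (ht1 : t ≤ 1) (htδ : t * smax ≤ δ / 2) (hn : 2 ≤ α * n)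
    (e : Fin n → Fin k) (a b : Fin k) :
    bernoulliProb (edgeProb ρ S z) (fun B => inF α e ∧
        oab (symAdj B) e a b / (ρ * nab e a b) ∉ Set.Ioo (smin - δ) (smax + δ))
      ≤ 2 * Real.exp (-(t * δ / 2) * (ρ * ((α * n) ^ 2 / 4))) := by
  by_cases he : inF α e
  · have hcard := card_pairClass_ge he hn a b
    have hρm : 0 < ρ * #(pairClass e a b) := mul_pos hρ (by nlinarith)
    simp only [he, true_and, oab_symAdj_div]
    refine (bernoulliProb_div_not_mem_Ioo_le hw hρm
      (fun l _ => mul_le_mul_of_nonneg_left (hS _ _).1 hρ.le)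
      (fun l _ => mul_le_mul_of_nonneg_left (hS _ _).2 hρ.le) ht0 ht1 htδ).trans ?_
    have hc : 0 ≤ t * δ / 2 := by positivity
    refine mul_le_mul_of_nonneg_left (Real.exp_le_exp.2 ?_) two_pos.le
    nlinarith [mul_nonneg (mul_nonneg hc hρ.le) (sub_nonneg.2 hcard)]
  · simp only [he, false_and, bernoulliProb, filter_false, sum_empty]
    positivity

lemma condProb_not_forall_ratio_mem_Ioo_le (hw : ∀ l, edgeProb ρ S z l ∈ Set.Icc 0 1)
    (hS : ∀ a b, S a b ∈ Set.Icc smin smax) (hρ : 0 < ρ) (hδ : 0 ≤ δ)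
    (ht0 : 0 ≤ t) (ht1 : t ≤ 1) (htδ : t * smax ≤ δ / 2) (hn : 2 ≤ α * n) :
    condProb ρ S z (fun A => ¬ ∀ a b : Fin k, ∀ e : Fin n → Fin k, inF α e →
        oab A e a b / (ρ * nab e a b) ∈ Set.Ioo (smin - δ) (smax + δ))
      ≤ (k : ℝ) ^ n * (k : ℝ) ^ 2 * (2 * Real.exp (-(t * δ / 2) * (ρ * ((α * n) ^ 2 / 4)))) := by
  rw [condProb_eq_bernoulliProb]
  calc _ ≤ bernoulliProb (edgeProb ρ S z) (fun B => ∃ q : (Fin n → Fin k) × Fin k × Fin k,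
          inF α q.1 ∧ oab (symAdj B) q.1 q.2.1 q.2.2 / (ρ * nab q.1 q.2.1 q.2.2)
            ∉ Set.Ioo (smin - δ) (smax + δ)) := by
        refine bernoulliProb_mono hw fun B hB => ?_
        simp only [not_forall] at hB
        obtain ⟨a, b, e, he, hbad⟩ := hB
        exact ⟨(e, a, b), he, hbad⟩
    _ ≤ ∑ q : (Fin n → Fin k) × Fin k × Fin k,
          2 * Real.exp (-(t * δ / 2) * (ρ * ((α * n) ^ 2 / 4))) :=
        (bernoulliProb_exists_le hw _).trans <| sum_le_sum fun q _ =>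
          bernoulliProb_inF_ratio_not_mem_Ioo_le hw hS hρ hδ ht0 ht1 htδ hn q.1 q.2.1 q.2.2
    _ = _ := by
        simp only [sum_const, card_univ, Fintype.card_prod, Fintype.card_fun, Fintype.card_fin,
          nsmul_eq_mul]
        push_cast
        ring

end EdgeModel

lemma sbmProb_mem_Icc {π : Fin k → ℝ} (hπ0 : ∀ a, 0 ≤ π a) (hπ1 : ∑ a, π a = 1)
    {ρ lo : ℝ} {S : Matrix (Fin k) (Fin k) ℝ}
    {E : (Fin n → Fin k) → (Fin n → Fin n → Bool) → Prop}
    (h : ∀ z, condProb ρ S z (E z) ∈ Set.Icc lo 1) : sbmProb π ρ S E ∈ Set.Icc lo 1 := by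
  have hprior : ∑ z : Fin n → Fin k, ∏ i, π (z i) = 1 := by
    rw [← Fintype.prod_sum fun _ a => π a]
    simp [hπ1]
  exact (convex_Icc lo 1).sum_mem (fun z _ => prod_nonneg fun i _ => hπ0 _) hprior
    fun z _ => h z

lemma tendsto_pow_mul_exp_neg_mul_atTop {K : ℝ} (hK : 0 < K) {g : ℕ → ℝ}
    (hg : Tendsto g atTop atTop) :
    Tendsto (fun n : ℕ => K ^ n * Real.exp (-(n * g n))) atTop (𝓝 0) := by
  refine squeeze_zero' (Eventually.of_forall fun n => by positivity) ?_
    (Real.tendsto_exp_neg_atTop_nhds_zero.comp tendsto_natCast_atTop_atTop)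
  filter_upwards [hg.eventually_ge_atTop (Real.log K + 1)] with n hn
  rw [← Real.exp_log (pow_pos hK n), Real.log_pow, ← Real.exp_add]
  exact Real.exp_le_exp.2 (by nlinarith [n.cast_nonneg (α := ℝ)])

lemma tendsto_union_bound (hk : 0 < k) {ρ : ℕ → ℝ}
    (hnρ : Tendsto (fun n : ℕ => (n : ℝ) * ρ n) atTop atTop) {α c : ℝ} (hα : 0 < α) (hc : 0 < c) :
    Tendsto (fun n : ℕ => (k : ℝ) ^ n * (k : ℝ) ^ 2 *
      (2 * Real.exp (-c * (ρ n * ((α * n) ^ 2 / 4))))) atTop (𝓝 0) := by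
  have := (tendsto_pow_mul_exp_neg_mul_atTop (K := k) (by positivity)
    (hnρ.const_mul_atTop (show 0 < c * α ^ 2 / 4 by positivity))).const_mul (2 * (k : ℝ) ^ 2)
  rw [mul_zero] at this
  refine this.congr fun n => ?_
  ring_nf

lemma tendsto_one_of_eventually_mem_Icc {f ε : ℕ → ℝ} (hε : Tendsto ε atTop (𝓝 0))
    (hf : ∀ᶠ n in atTop, f n ∈ Set.Icc (1 - ε n) 1) : Tendsto f atTop (𝓝 1) :=
  tendsto_of_tendsto_of_tendsto_of_le_of_le' (by simpa using hε.const_sub 1) tendsto_const_nhds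
    (hf.mono fun _ h => h.1) (hf.mono fun _ h => h.2)

lemma exists_pos_le_one_mul_le {s δ : ℝ} (hs : 0 < s) (hδ : 0 < δ) :
    ∃ t, 0 < t ∧ t ≤ 1 ∧ t * s ≤ δ / 2 := by
  refine ⟨min 1 (δ / (2 * s)), lt_min one_pos (by positivity), min_le_left _ _, ?_⟩
  calc min 1 (δ / (2 * s)) * s ≤ δ / (2 * s) * s := by gcongr; exact min_le_right _ _
    _ = δ / 2 := by field_simp

theorem stmt13_general (k : ℕ) (π : Fin k → ℝ) (hπpos : ∀ a, 0 < π a) (hπsum : ∑ a, π a = 1)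
    (S : Matrix (Fin k) (Fin k) ℝ) (hSpos : ∀ a b, 0 < S a b)
    (ρ : ℕ → ℝ) (hρpos : ∀ n, 0 < ρ n) (hρs : ∀ n, ρ n * sMax S ≤ 1 / 2)
    (hnρ : Tendsto (fun n : ℕ => (n : ℝ) * ρ n) atTop atTop)
    (α δ : ℝ) (hα : 0 < α) (hδ0 : 0 < δ) :
    Tendsto (fun n : ℕ => sbmProb π (ρ n) S
        (fun (z : Fin n → Fin k) (A : Fin n → Fin n → Bool) =>
          ∀ a b : Fin k, ∀ e : Fin n → Fin k, inF α e →
            oab A e a b / (ρ n * nab e a b) ∈ Set.Ioo (sMin S - δ) (sMax S + δ)))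
      atTop (nhds 1) := by
  have hk : 0 < k := Nat.pos_of_ne_zero (by rintro rfl; simp at hπsum)
  obtain ⟨t, ht0, ht1, htδ⟩ :=
    exists_pos_le_one_mul_le ((hSpos ⟨0, hk⟩ ⟨0, hk⟩).trans_le (le_sMax S _ _)) hδ0
  refine tendsto_one_of_eventually_mem_Icc
    (tendsto_union_bound hk hnρ hα (show 0 < t * δ / 2 by positivity)) ?_
  filter_upwards [(tendsto_natCast_atTop_atTop.const_mul_atTop hα).eventually_ge_atTop 2]
    with n hn
  have hw (z : Fin n → Fin k) := edgeProb_mem_Icc (z := z) (hρpos n).le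
    (fun a b => (hSpos a b).le) fun a b => by nlinarith [le_sMax S a b, hρpos n, hρs n]
  exact sbmProb_mem_Icc (fun a => (hπpos a).le) hπsum fun z =>
    condProb_mem_Icc_of_compl_le (hw z) <| condProb_not_forall_ratio_mem_Ioo_le (hw z)
      (fun a b => ⟨sMin_le S a b, le_sMax S a b⟩) (hρpos n) hδ0.le ht0.le ht1 htδ hn

/-- rescaled empirical edge probabilities lie in `(s_min−δ, s_max+δ)`
uniformly over `F(n,α)`, with probability tending to one. -/
theorem stmt13 (k : ℕ) (π : Fin k → ℝ) (hπpos : ∀ a, 0 < π a) (hπsum : ∑ a, π a = 1)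
    (S : Matrix (Fin k) (Fin k) ℝ) (hSsym : S.IsSymm) (hSpos : ∀ a b, 0 < S a b)
    (ρ : ℕ → ℝ) (hρpos : ∀ n, 0 < ρ n) (hρs : ∀ n, ρ n * sMax S ≤ 1 / 2)
    (hnρ : Tendsto (fun n : ℕ => (n : ℝ) * ρ n) atTop atTop)
    (α δ : ℝ) (hα : 0 < α) (hδ0 : 0 < δ) (hδ : δ < sMin S / 2) :
    Tendsto (fun n : ℕ => sbmProb π (ρ n) S
        (fun (z : Fin n → Fin k) (A : Fin n → Fin n → Bool) =>
          ∀ a b : Fin k, ∀ e : Fin n → Fin k, inF α e →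
            oab A e a b / (ρ n * nab e a b) ∈ Set.Ioo (sMin S - δ) (sMax S + δ)))
      atTop (nhds 1) :=
  stmt13_general k π hπpos hπsum S hSpos ρ hρpos hρs hnρ α δ hα hδ0

end SBM
end
end

section
/- Fix z ∈ [k]^n and let A be a random symmetric {0,1} matrix with zero diagonal whose entries A_{ij}, 1 ≤ i < j ≤ n, are independent Bernoulli(ρ S_{z_i z_j}). For e ∈ [k]^n let W(e,z) = (1/2) Σ_{1≤a,b≤k} ( o_{ab}(e)/n² − E[o_{ab}(e)]/n² − o_{ab}(z)/n² + E[o_{ab}(z)]/n² ) log S_{ab}. Then for every x > 0, P( W(e,z) > x ) ≤ exp( −sup_{t∈(0,1]} ( n² x t − ρ n² C_t(R(e,z),S) ) + D ρ d(e,z)² ), where d(e,z) = #{i : e_i ≠ z_i} and D = max_{t∈[0,1]} max_{a≠a', b≠b'} K_t(S_{ab}‖S_{a'b'}). -/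
open Finset Filter
open scoped Classical BigOperators Topology

noncomputable section

namespace SBM

variable {n k : ℕ}

/-!
Up to the factor `n⁻²`, the statistic is
`Σ_{i<j} (A_ij - ρ S_{z_i z_j}) log (S_{e_i e_j} / S_{z_i z_j})`, a sum of independent centred
Bernoulli variables. The exponential Markov inequality at `t ∈ (0, 1]` and the bound `E exp (c (B - q)) ≤ exp (q (eᶜ - 1 - c))` for `B ~ Bernoulli(q)` give
`P(W > x) ≤ exp (-n² x t + ρ Σ_{i<j} K_t(S_{z_i z_j} ‖ S_{e_i e_j}))`. Only pairs with a
misclassified endpoint contribute to the last sum: those with exactly one give `n² C_t(R(e,z), S)`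
(by symmetry of `S`), those with two at most `D d(e,z)²`. Optimising over `t` finishes the proof.
-/

theorem Kt_eq_mul_exp {p q : ℝ} (hp : 0 < p) (hq : 0 < q) (t : ℝ) :
    Kt t p q =
      p * (Real.exp (t * (Real.log q - Real.log p)) - 1 - t * (Real.log q - Real.log p)) := by
  have hmix : p ^ (1 - t) * q ^ t = p * Real.exp (t * (Real.log q - Real.log p)) := by
    rw [Real.rpow_def_of_pos hp, Real.rpow_def_of_pos hq, ← Real.exp_add,
      ← Real.exp_log hp, ← Real.exp_add, Real.log_exp]
    ring_nf
  rw [Kt, hmix, Real.log_div hp.ne' hq.ne']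
  ring

theorem Kt_nonneg {p q : ℝ} (hp : 0 < p) (hq : 0 < q) (t : ℝ) : 0 ≤ Kt t p q := by
  rw [Kt_eq_mul_exp hp hq]
  have := Real.add_one_le_exp (t * (Real.log q - Real.log p))
  exact mul_nonneg hp.le (by linarith)

theorem Kt_self {p : ℝ} (hp : 0 < p) (t : ℝ) : Kt t p p = 0 := by
  simp [Kt_eq_mul_exp hp hp]

theorem Kt_le_K1 {p q t : ℝ} (hp : 0 < p) (hq : 0 < q) (ht0 : 0 ≤ t) (ht1 : t ≤ 1) :
    Kt t p q ≤ K1 p q := by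
  have hK1 : 0 ≤ K1 p q := by
    simpa [Kt, K1, add_comm, add_sub_assoc] using Kt_nonneg hp hq 1
  have hamgm : p ^ (1 - t) * q ^ t ≤ (1 - t) * p + t * q :=
    Real.geom_mean_le_arith_mean2_weighted (by linarith) ht0 hp.le hq.le (by ring)
  calc Kt t p q ≤ t * K1 p q := by unfold Kt K1; nlinarith
    _ ≤ K1 p q := mul_le_of_le_one_left hK1 ht1

def DSet (S : Matrix (Fin k) (Fin k) ℝ) : Set ℝ :=
  {y : ℝ | ∃ t ∈ Set.Icc (0 : ℝ) 1, ∃ a a' b b' : Fin k,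
      a ≠ a' ∧ b ≠ b' ∧ y = Kt t (S a b) (S a' b')}

theorem bddAbove_DSet {S : Matrix (Fin k) (Fin k) ℝ} (hSpos : ∀ a b, 0 < S a b) :
    BddAbove (DSet S) := by
  obtain ⟨M, hM⟩ := (Set.finite_range fun q : (Fin k × Fin k) × (Fin k × Fin k) =>
    K1 (S q.1.1 q.1.2) (S q.2.1 q.2.2)).bddAbove
  refine ⟨M, ?_⟩
  rintro _ ⟨t, ⟨ht0, ht1⟩, a, a', b, b', -, -, rfl⟩
  exact (Kt_le_K1 (hSpos a b) (hSpos a' b') ht0 ht1).trans (hM ⟨((a, b), (a', b')), rfl⟩)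

theorem Kt_le_sSup_DSet {S : Matrix (Fin k) (Fin k) ℝ} (hSpos : ∀ a b, 0 < S a b)
    {t : ℝ} (ht : t ∈ Set.Icc (0 : ℝ) 1) {a a' b b' : Fin k} (ha : a ≠ a') (hb : b ≠ b') :
    Kt t (S a b) (S a' b') ≤ sSup (DSet S) :=
  le_csSup (bddAbove_DSet hSpos) ⟨t, ht, a, a', b, b', ha, hb, rfl⟩

theorem sSup_DSet_nonneg {S : Matrix (Fin k) (Fin k) ℝ} (hSpos : ∀ a b, 0 < S a b)
    {a a' : Fin k} (ha : a ≠ a') : 0 ≤ sSup (DSet S) :=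
  (Kt_nonneg (hSpos a a) (hSpos a' a') 0).trans
    (Kt_le_sSup_DSet hSpos (Set.left_mem_Icc.2 zero_le_one) ha ha)

def upperPairs (n : ℕ) : Finset (Fin n × Fin n) :=
  Finset.univ.filter fun p => p.1 < p.2

theorem sum_sum_eq_two_mul_sum_upperPairs {d : Fin n → Fin n → ℝ}
    (hsym : ∀ i j, d i j = d j i) (hdiag : ∀ i, d i i = 0) :
    ∑ i, ∑ j, d i j = 2 * ∑ p ∈ upperPairs n, d p.1 p.2 := by
  have hsplit : ∀ i j, d i j = (if i < j then d i j else 0) + if j < i then d j i else 0 := by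
    intro i j
    rcases lt_trichotomy i j with h | rfl | h
    · simp [h, h.not_gt]
    · simp [hdiag]
    · rw [if_neg h.not_gt, if_pos h, hsym, zero_add]
  have hupper : ∑ i, ∑ j, (if i < j then d i j else 0) = ∑ p ∈ upperPairs n, d p.1 p.2 := by
    rw [upperPairs, Finset.sum_filter, ← Fintype.sum_prod_type']
  rw [Finset.sum_congr rfl fun i _ => Finset.sum_congr rfl fun j _ => hsplit i j]
  simp_rw [Finset.sum_add_distrib]
  rw [Finset.sum_comm (f := fun i j => if j < i then d j i else 0), hupper]
  ring

theorem two_mul_sum_upperPairs_le {d : Fin n → Fin n → ℝ}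
    (hsym : ∀ i j, d i j = d j i) (hnonneg : ∀ i j, 0 ≤ d i j) :
    2 * ∑ p ∈ upperPairs n, d p.1 p.2 ≤ ∑ i, ∑ j, d i j := by
  have h := sum_sum_eq_two_mul_sum_upperPairs (d := fun i j => if i = j then 0 else d i j)
    (fun i j => by
      by_cases h : i = j
      · simp [h]
      · rw [if_neg h, if_neg (Ne.symm h), hsym]) (fun i => by simp)
  have hupper : ∀ p ∈ upperPairs n, (if p.1 = p.2 then 0 else d p.1 p.2) = d p.1 p.2 := by
    intro p hp
    simp [(Finset.mem_filter.1 hp).2.ne]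
  rw [Finset.sum_congr rfl hupper] at h
  rw [← h]
  gcongr with i _ j _
  split_ifs
  exacts [hnonneg i j, le_rfl]

def validAdjEquiv :
    {A : Fin n → Fin n → Bool // ValidAdj A} ≃ ({p : Fin n × Fin n // p.1 < p.2} → Bool) where
  toFun A q := A.1 q.1.1 q.1.2
  invFun f := ⟨fun i j => if h : i < j then f ⟨(i, j), h⟩ else if h' : j < i then f ⟨(j, i), h'⟩
      else false, by
    refine ⟨fun i j => ?_, fun i => by simp⟩
    rcases lt_trichotomy i j with h | rfl | h
    · simp [h, h.not_gt]
    · rfl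
    · simp [h, h.not_gt]⟩
  left_inv := by
    rintro ⟨A, hsym, hdiag⟩
    ext i j
    rcases lt_trichotomy i j with h | rfl | h
    · simp [h]
    · simp [hdiag]
    · simp [h, h.not_gt, hsym i j]
  right_inv f := funext fun q => dif_pos q.2

theorem sum_validAdj_prod_upperPairs (g : Fin n × Fin n → Bool → ℝ) :
    ∑ A : Fin n → Fin n → Bool, (if ValidAdj A then ∏ p ∈ upperPairs n, g p (A p.1 p.2) else 0)
      = ∏ p ∈ upperPairs n, ∑ b, g p b := by
  have hupper : ∀ p, p ∈ upperPairs n ↔ p.1 < p.2 := by simp [upperPairs]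
  rw [← Finset.sum_filter, Finset.sum_subtype (p := ValidAdj) _ (fun A => by simp),
    Finset.prod_subtype _ hupper, Fintype.prod_sum, ← validAdjEquiv.sum_comp]
  refine Finset.sum_congr rfl fun A _ => ?_
  rw [Finset.prod_subtype _ hupper]
  rfl

theorem edgeDensity_eq_prod_upperPairs (ρ : ℝ) (S : Matrix (Fin k) (Fin k) ℝ)
    (z : Fin n → Fin k) (A : Fin n → Fin n → Bool) :
    edgeDensity ρ S z A = ∏ p ∈ upperPairs n,
      (if A p.1 p.2 then ρ * S (z p.1) (z p.2) else 1 - ρ * S (z p.1) (z p.2)) := rfl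

theorem condExp_prod_upperPairs (ρ : ℝ) (S : Matrix (Fin k) (Fin k) ℝ) (z : Fin n → Fin k)
    (h : Fin n × Fin n → Bool → ℝ) :
    condExp ρ S z (fun A => ∏ p ∈ upperPairs n, h p (A p.1 p.2)) =
      ∏ p ∈ upperPairs n, ((1 - ρ * S (z p.1) (z p.2)) * h p false
        + ρ * S (z p.1) (z p.2) * h p true) := by
  rw [condExp]
  simp_rw [edgeDensity_eq_prod_upperPairs, ← Finset.prod_mul_distrib]
  refine (sum_validAdj_prod_upperPairs fun p b =>
    (if b then ρ * S (z p.1) (z p.2) else 1 - ρ * S (z p.1) (z p.2)) * h p b).trans ?_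
  simp [add_comm]

section condExp

variable (ρ : ℝ) (S : Matrix (Fin k) (Fin k) ℝ) (z : Fin n → Fin k)

theorem condExp_congr {f g : (Fin n → Fin n → Bool) → ℝ} (h : ∀ A, ValidAdj A → f A = g A) :
    condExp ρ S z f = condExp ρ S z g :=
  Finset.sum_congr rfl fun A _ => by
    split_ifs with hA
    · rw [h A hA]
    · rfl

theorem condExp_const_mul (c : ℝ) (f : (Fin n → Fin n → Bool) → ℝ) :
    condExp ρ S z (fun A => c * f A) = c * condExp ρ S z f := by
  simp_rw [condExp, Finset.mul_sum, mul_ite, mul_zero, mul_left_comm]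

theorem condExp_sum {ι : Type*} (s : Finset ι) (f : ι → (Fin n → Fin n → Bool) → ℝ) :
    condExp ρ S z (fun A => ∑ i ∈ s, f i A) = ∑ i ∈ s, condExp ρ S z (f i) := by
  simp only [condExp]
  rw [Finset.sum_comm]
  refine Finset.sum_congr rfl fun A _ => ?_
  split_ifs <;> simp [Finset.mul_sum]

theorem condExp_edge_of_lt {i j : Fin n} (hij : i < j) :
    condExp ρ S z (fun A => if A i j then 1 else 0) = ρ * S (z i) (z j) := by
  have hind : ∀ A : Fin n → Fin n → Bool, (if A i j then (1 : ℝ) else 0) =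
      ∏ p ∈ upperPairs n, if p = (i, j) then (if A p.1 p.2 then 1 else 0) else 1 := by
    intro A
    rw [Finset.prod_ite_eq' (upperPairs n) (i, j) (fun p => if A p.1 p.2 then (1 : ℝ) else 0)]
    simp [upperPairs, hij]
  refine (condExp_congr ρ S z fun A _ => hind A).trans <|
    (condExp_prod_upperPairs ρ S z fun p b =>
      if p = (i, j) then (if b then 1 else 0) else 1).trans ?_
  rw [Finset.prod_congr rfl fun p _ => show (1 - ρ * S (z p.1) (z p.2)) *
      (if p = (i, j) then (if false then 1 else 0) else 1) + ρ * S (z p.1) (z p.2) *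
      (if p = (i, j) then (if true then 1 else 0) else 1) =
      if p = (i, j) then ρ * S (z p.1) (z p.2) else 1 by split_ifs <;> simp_all,
    Finset.prod_ite_eq']
  simp [upperPairs, hij]

theorem condExp_edge (hSsym : S.IsSymm) (i j : Fin n) :
    condExp ρ S z (fun A => if A i j then 1 else 0) = if i = j then 0 else ρ * S (z i) (z j) := by
  rcases lt_trichotomy i j with h | rfl | h
  · simp [condExp_edge_of_lt ρ S z h, h.ne]
  · rw [condExp_congr ρ S z (g := fun _ => 0) fun A hA => by simp [hA.2 i]]
    simp [condExp]
  · rw [condExp_congr ρ S z fun A hA => by rw [hA.1 i j], condExp_edge_of_lt ρ S z h,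
      if_neg h.ne', hSsym.apply]

end condExp

theorem sum_oab_mul (A : Fin n → Fin n → Bool) (f : Fin n → Fin k) (g : Fin k → Fin k → ℝ) :
    ∑ a, ∑ b, oab A f a b * g a b = ∑ i, ∑ j, g (f i) (f j) * (if A i j then 1 else 0) := by
  simp_rw [oab, Finset.sum_mul, Finset.sum_comm (γ := Fin k) (α := Fin n)]
  refine Finset.sum_congr rfl fun i _ => Finset.sum_congr rfl fun j _ => ?_
  simp [ite_and, Finset.sum_ite_eq]

theorem sum_condExp_oab_mul (ρ : ℝ) {S : Matrix (Fin k) (Fin k) ℝ} (hSsym : S.IsSymm)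
    (z f : Fin n → Fin k) (g : Fin k → Fin k → ℝ) :
    ∑ a, ∑ b, condExp ρ S z (fun A => oab A f a b) * g a b =
      ∑ i, ∑ j, g (f i) (f j) * (if i = j then 0 else ρ * S (z i) (z j)) := by
  simp_rw [mul_comm _ (g _ _), ← condExp_const_mul, ← condExp_sum, ← condExp_edge ρ S z hSsym,
    ← condExp_const_mul, ← condExp_sum]
  refine condExp_congr ρ S z fun A _ => ?_
  simp_rw [mul_comm (g _ _) (oab _ _ _ _)]
  exact sum_oab_mul A f g

def centeredLogLikRatio (ρ : ℝ) (S : Matrix (Fin k) (Fin k) ℝ) (z e : Fin n → Fin k)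
    (A : Fin n → Fin n → Bool) : ℝ :=
  ∑ p ∈ upperPairs n, ((if A p.1 p.2 then 1 else 0) - ρ * S (z p.1) (z p.2)) *
    (Real.log (S (e p.1) (e p.2)) - Real.log (S (z p.1) (z p.2)))

theorem half_sum_centered_oab_eq (ρ : ℝ) {S : Matrix (Fin k) (Fin k) ℝ} (hSsym : S.IsSymm)
    (z e : Fin n → Fin k) {A : Fin n → Fin n → Bool} (hA : ValidAdj A) :
    (1 / 2) * ∑ a : Fin k, ∑ b : Fin k,
        (oab A e a b / (n : ℝ) ^ 2
            - condExp ρ S z (fun A' => oab A' e a b) / (n : ℝ) ^ 2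
            - oab A z a b / (n : ℝ) ^ 2
            + condExp ρ S z (fun A' => oab A' z a b) / (n : ℝ) ^ 2) * Real.log (S a b)
      = centeredLogLikRatio ρ S z e A / (n : ℝ) ^ 2 := by
  set d : Fin n → Fin n → ℝ := fun i j =>
    ((if A i j then 1 else 0) - if i = j then 0 else ρ * S (z i) (z j)) *
      (Real.log (S (e i) (e j)) - Real.log (S (z i) (z j)))
  have hsym : ∀ i j, d i j = d j i := fun i j => by
    simp only [d, hA.1 i j, @eq_comm _ i j, hSsym.apply (z i) (z j), hSsym.apply (e i) (e j)]
  have hdiag : ∀ i, d i i = 0 := fun i => by simp [d, hA.2 i]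
  have hupper : ∑ p ∈ upperPairs n, d p.1 p.2 = centeredLogLikRatio ρ S z e A := by
    refine Finset.sum_congr rfl fun p hp => ?_
    simp [d, (Finset.mem_filter.1 hp).2.ne]
  have hsplit : ∑ a : Fin k, ∑ b : Fin k,
      (oab A e a b / (n : ℝ) ^ 2
          - condExp ρ S z (fun A' => oab A' e a b) / (n : ℝ) ^ 2
          - oab A z a b / (n : ℝ) ^ 2
          + condExp ρ S z (fun A' => oab A' z a b) / (n : ℝ) ^ 2) * Real.log (S a b)
      = (∑ i, ∑ j, d i j) / (n : ℝ) ^ 2 := by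
    simp only [sub_mul, add_mul, div_mul_eq_mul_div, Finset.sum_add_distrib,
      Finset.sum_sub_distrib, ← Finset.sum_div]
    rw [sum_oab_mul, sum_oab_mul, sum_condExp_oab_mul ρ hSsym, sum_condExp_oab_mul ρ hSsym]
    rw [← sub_div, ← sub_div, ← add_div, ← Finset.sum_sub_distrib, ← Finset.sum_sub_distrib,
      ← Finset.sum_add_distrib]
    refine congrArg (· / _) (Finset.sum_congr rfl fun i _ => ?_)
    rw [← Finset.sum_sub_distrib, ← Finset.sum_sub_distrib, ← Finset.sum_add_distrib]
    refine Finset.sum_congr rfl fun j _ => ?_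
    ring
  rw [hsplit, sum_sum_eq_two_mul_sum_upperPairs hsym hdiag, hupper]
  ring

theorem bernoulli_mgf_le (q c : ℝ) :
    (1 - q) * Real.exp (-(q * c)) + q * Real.exp ((1 - q) * c) ≤
      Real.exp (q * (Real.exp c - 1 - c)) := by
  have hfactor : (1 - q) * Real.exp (-(q * c)) + q * Real.exp ((1 - q) * c) =
      Real.exp (-(q * c)) * (1 + q * (Real.exp c - 1)) := by
    rw [show (1 - q) * c = c + -(q * c) by ring, Real.exp_add]
    ring
  rw [hfactor, show q * (Real.exp c - 1 - c) = -(q * c) + q * (Real.exp c - 1) by ring,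
    Real.exp_add]
  gcongr
  linarith [Real.add_one_le_exp (q * (Real.exp c - 1))]

section edgeModel

variable {ρ : ℝ} {S : Matrix (Fin k) (Fin k) ℝ}

theorem edgeDensity_nonneg (hq0 : ∀ a b, 0 ≤ ρ * S a b) (hq1 : ∀ a b, ρ * S a b ≤ 1)
    (z : Fin n → Fin k) (A : Fin n → Fin n → Bool) : 0 ≤ edgeDensity ρ S z A :=
  Finset.prod_nonneg fun p _ => by
    split_ifs
    exacts [hq0 _ _, sub_nonneg.2 (hq1 _ _)]

theorem condProb_le_exp_mul_condExp {z : Fin n → Fin k}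
    (hdens : ∀ A, 0 ≤ edgeDensity ρ S z A) {E : (Fin n → Fin n → Bool) → Prop}
    {T : (Fin n → Fin n → Bool) → ℝ} {c t : ℝ} (ht : 0 ≤ t)
    (hE : ∀ A, ValidAdj A → E A → c < T A) :
    condProb ρ S z E ≤ Real.exp (-(t * c)) * condExp ρ S z (fun A => Real.exp (t * T A)) := by
  rw [condExp, Finset.mul_sum]
  refine Finset.sum_le_sum fun A _ => ?_
  by_cases hA : ValidAdj A
  · rw [if_pos hA, ← mul_assoc, mul_comm (Real.exp _), mul_assoc, ← Real.exp_add]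
    by_cases hEA : E A
    · rw [if_pos ⟨hA, hEA⟩]
      refine le_mul_of_one_le_right (hdens A) (Real.one_le_exp ?_)
      nlinarith [hE A hA hEA]
    · rw [if_neg fun h => hEA h.2]
      exact mul_nonneg (hdens A) (Real.exp_pos _).le
  · rw [if_neg fun h => hA h.1, if_neg hA, mul_zero]

theorem condExp_exp_centeredLogLikRatio_le (hSpos : ∀ a b, 0 < S a b)
    (hq0 : ∀ a b, 0 ≤ ρ * S a b) (hq1 : ∀ a b, ρ * S a b ≤ 1) (z e : Fin n → Fin k) (t : ℝ) :
    condExp ρ S z (fun A => Real.exp (t * centeredLogLikRatio ρ S z e A)) ≤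
      Real.exp (ρ * ∑ p ∈ upperPairs n, Kt t (S (z p.1) (z p.2)) (S (e p.1) (e p.2))) := by
  set q : Fin n × Fin n → ℝ := fun p => ρ * S (z p.1) (z p.2)
  set w : Fin n × Fin n → ℝ := fun p =>
    Real.log (S (e p.1) (e p.2)) - Real.log (S (z p.1) (z p.2))
  have hprod : ∀ A, Real.exp (t * centeredLogLikRatio ρ S z e A) =
      ∏ p ∈ upperPairs n, Real.exp (t * (((if A p.1 p.2 then 1 else 0) - q p) * w p)) := by
    intro A
    rw [centeredLogLikRatio, Finset.mul_sum, Real.exp_sum]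
  refine (condExp_congr ρ S z fun A _ => hprod A).trans_le <|
    (condExp_prod_upperPairs ρ S z fun p b =>
      Real.exp (t * (((if b then 1 else 0) - q p) * w p))).trans_le ?_
  rw [Finset.mul_sum, Real.exp_sum]
  refine Finset.prod_le_prod (fun p _ => ?_) fun p _ => ?_
  · have := hq1 (z p.1) (z p.2)
    have := hq0 (z p.1) (z p.2)
    positivity
  · have hK := Kt_eq_mul_exp (hSpos (z p.1) (z p.2)) (hSpos (e p.1) (e p.2)) t
    calc (1 - q p) * Real.exp (t * (((if false then 1 else 0) - q p) * w p))
          + q p * Real.exp (t * (((if true then 1 else 0) - q p) * w p))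
        = (1 - q p) * Real.exp (-(q p * (t * w p))) + q p * Real.exp ((1 - q p) * (t * w p)) := by
          simp only [Bool.false_eq_true, ↓reduceIte]
          ring_nf
      _ ≤ Real.exp (q p * (Real.exp (t * w p) - 1 - t * w p)) := bernoulli_mgf_le _ _
      _ = Real.exp (ρ * Kt t (S (z p.1) (z p.2)) (S (e p.1) (e p.2))) := by
          rw [hK, ← mul_assoc]

end edgeModel

theorem natCast_mul_confusion (e z : Fin n → Fin k) (a b : Fin k) :
    (n : ℝ) * confusion e z a b = ∑ i, if e i = a ∧ z i = b then (1 : ℝ) else 0 := by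
  rcases n.eq_zero_or_pos with rfl | hn
  · simp
  · rw [confusion, Matrix.of_apply, ← mul_assoc, mul_one_div_cancel (by positivity), one_mul]

theorem natCast_mul_colSum_confusion (e z : Fin n → Fin k) (b : Fin k) :
    (n : ℝ) * colSum (confusion e z) b = ∑ i, if z i = b then (1 : ℝ) else 0 := by
  rw [colSum, Finset.mul_sum]
  simp_rw [natCast_mul_confusion]
  rw [Finset.sum_comm]
  refine Finset.sum_congr rfl fun i _ => ?_
  simp [ite_and, Finset.sum_ite_eq]

theorem sq_mul_CtRS_confusion {S : Matrix (Fin k) (Fin k) ℝ} (hSpos : ∀ a b, 0 < S a b)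
    (e z : Fin n → Fin k) (t : ℝ) :
    (n : ℝ) ^ 2 * CtRS t (confusion e z) S =
      ∑ i, ∑ j, Kt t (S (z i) (z j)) (S (z i) (e j)) := by
  have hdiag : ∀ a, ∑ p ∈ offDiag k, colSum (confusion e z) a * Kt t (S a p.1) (S a p.2) *
      confusion e z p.2 p.1 = ∑ p : Fin k × Fin k, colSum (confusion e z) a *
        Kt t (S a p.1) (S a p.2) * confusion e z p.2 p.1 := by
    intro a
    refine Finset.sum_subset (Finset.subset_univ _) fun p _ hp => ?_
    simp only [offDiag, Finset.mem_filter, Finset.mem_univ, true_and, not_not] at hp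
    rw [hp, Kt_self (hSpos _ _), mul_zero, zero_mul]
  have hterm : ∀ a (p : Fin k × Fin k), (n : ℝ) ^ 2 * (colSum (confusion e z) a *
      Kt t (S a p.1) (S a p.2) * confusion e z p.2 p.1) = ∑ i, ∑ j,
        if z i = a ∧ e j = p.2 ∧ z j = p.1 then Kt t (S a p.1) (S a p.2) else 0 := by
    intro a p
    rw [show (n : ℝ) ^ 2 * (colSum (confusion e z) a * Kt t (S a p.1) (S a p.2) *
        confusion e z p.2 p.1) = (n * colSum (confusion e z) a) * Kt t (S a p.1) (S a p.2) *
          (n * confusion e z p.2 p.1) by ring,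
      natCast_mul_colSum_confusion, natCast_mul_confusion, Finset.sum_mul, Finset.sum_mul]
    simp_rw [Finset.mul_sum]
    refine Finset.sum_congr rfl fun i _ => Finset.sum_congr rfl fun j _ => ?_
    by_cases hi : z i = a <;> by_cases hj : e j = p.2 ∧ z j = p.1 <;> simp [hi, hj]
  simp_rw [CtRS, hdiag, Finset.mul_sum, hterm]
  simp_rw [Finset.sum_comm (γ := Fin k × Fin k), Finset.sum_comm (γ := Fin k)]
  refine Finset.sum_congr rfl fun i _ => Finset.sum_congr rfl fun j _ => ?_
  simp [ite_and, Fintype.sum_prod_type, Finset.sum_ite_eq]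

theorem Kt_pair_le_split {S : Matrix (Fin k) (Fin k) ℝ} (hSsym : S.IsSymm)
    (hSpos : ∀ a b, 0 < S a b) {t : ℝ} (ht : t ∈ Set.Icc (0 : ℝ) 1) (e z : Fin n → Fin k)
    (i j : Fin n) :
    Kt t (S (z i) (z j)) (S (e i) (e j)) ≤
      (if e i ≠ z i ∧ e j ≠ z j then sSup (DSet S) else 0)
        + Kt t (S (z i) (z j)) (S (z i) (e j)) + Kt t (S (z j) (z i)) (S (z j) (e i)) := by
  have hG : ∀ a b c, 0 ≤ Kt t (S a b) (S a c) := fun _ _ _ => Kt_nonneg (hSpos _ _) (hSpos _ _) t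
  by_cases hi : e i = z i
  · simp [hi, hG]
  by_cases hj : e j = z j
  · simp [hj, hi, hG, hSsym.apply (z i) (z j), hSsym.apply (e i) (z j)]
  rw [if_pos ⟨hi, hj⟩]
  have := Kt_le_sSup_DSet hSpos ht (Ne.symm hi) (Ne.symm hj)
  linarith [hG (z i) (z j) (e j), hG (z j) (z i) (e i)]

theorem sum_upperPairs_Kt_le {S : Matrix (Fin k) (Fin k) ℝ} (hSsym : S.IsSymm)
    (hSpos : ∀ a b, 0 < S a b) {t : ℝ} (ht : t ∈ Set.Icc (0 : ℝ) 1) (e z : Fin n → Fin k) :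
    ∑ p ∈ upperPairs n, Kt t (S (z p.1) (z p.2)) (S (e p.1) (e p.2)) ≤
      (n : ℝ) ^ 2 * CtRS t (confusion e z) S + sSup (DSet S) * (hamming e z : ℝ) ^ 2 := by
  have hboth : ∑ i : Fin n, ∑ j : Fin n,
      (if e i ≠ z i ∧ e j ≠ z j then sSup (DSet S) else 0) = sSup (DSet S) * (hamming e z) ^ 2 := by
    simp only [ne_eq, ite_and, ite_not, Finset.sum_ite_irrel, Finset.sum_const_zero,
      Finset.sum_ite, Finset.sum_const, nsmul_eq_mul, zero_add, hamming]
    ring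
  have hD : 0 ≤ sSup (DSet S) * (hamming e z : ℝ) ^ 2 := by
    rcases Finset.eq_empty_or_nonempty (Finset.univ.filter fun i => e i ≠ z i) with h | ⟨i, hi⟩
    · simp [hamming, h]
    · exact mul_nonneg (sSup_DSet_nonneg hSpos (Finset.mem_filter.1 hi).2) (sq_nonneg _)
  have hsum := Finset.sum_le_sum fun i (_ : i ∈ Finset.univ) =>
    Finset.sum_le_sum fun j (_ : j ∈ Finset.univ) => Kt_pair_le_split hSsym hSpos ht e z i j
  simp only [Finset.sum_add_distrib, hboth] at hsum
  rw [Finset.sum_comm (f := fun i j => Kt t (S (z j) (z i)) (S (z j) (e i))),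
    ← sq_mul_CtRS_confusion hSpos] at hsum
  have hpair := two_mul_sum_upperPairs_le
    (d := fun i j => Kt t (S (z i) (z j)) (S (e i) (e j)))
    (fun i j => by simp only [hSsym.apply (z i) (z j), hSsym.apply (e i) (e j)])
    (fun i j => Kt_nonneg (hSpos _ _) (hSpos _ _) t)
  linarith

theorem le_exp_neg_sSup_image_add {L B : ℝ} {f : ℝ → ℝ} {s : Set ℝ} (hs : s.Nonempty)
    (h : ∀ t ∈ s, L ≤ Real.exp (-f t + B)) : L ≤ Real.exp (-sSup (f '' s) + B) := by
  rcases le_or_gt L 0 with hL | hL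
  · exact hL.trans (Real.exp_pos _).le
  have hsup : sSup (f '' s) ≤ B - Real.log L := by
    refine csSup_le (hs.image f) ?_
    rintro _ ⟨t, ht, rfl⟩
    have := Real.log_le_log hL (h t ht)
    rw [Real.log_exp] at this
    linarith
  calc L = Real.exp (Real.log L) := (Real.exp_log hL).symm
    _ ≤ Real.exp (-sSup (f '' s) + B) := by gcongr; linarith

theorem mul_lt_of_lt_div_of_nonneg {c x T : ℝ} (hc : 0 ≤ c) (hx : 0 < x) (h : x < T / c) :
    c * x < T := by
  rcases hc.eq_or_lt with rfl | hc
  · rw [div_zero] at h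
    linarith
  · rwa [mul_comm, ← lt_div_iff₀ hc]

/-- Chernoff bound for the weighted centered edge-count difference. -/
theorem stmt16 (n k : ℕ) (S : Matrix (Fin k) (Fin k) ℝ) (hSsym : S.IsSymm)
    (hSpos : ∀ a b, 0 < S a b) (ρ : ℝ) (hρ0 : 0 < ρ) (hρ1 : ∀ a b, ρ * S a b < 1)
    (z e : Fin n → Fin k) (x : ℝ) (hx : 0 < x) :
    condProb ρ S z (fun A =>
        x < (1 / 2) * ∑ a : Fin k, ∑ b : Fin k,
            (oab A e a b / (n : ℝ) ^ 2
                - condExp ρ S z (fun A' => oab A' e a b) / (n : ℝ) ^ 2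
                - oab A z a b / (n : ℝ) ^ 2
                + condExp ρ S z (fun A' => oab A' z a b) / (n : ℝ) ^ 2) *
              Real.log (S a b))
      ≤ Real.exp
          (-(sSup ((fun t => (n : ℝ) ^ 2 * x * t - ρ * (n : ℝ) ^ 2 *
                CtRS t (confusion e z) S) '' Set.Ioc (0 : ℝ) 1))
            + (sSup {y : ℝ | ∃ t ∈ Set.Icc (0 : ℝ) 1, ∃ a a' b b' : Fin k,
                  a ≠ a' ∧ b ≠ b' ∧ y = Kt t (S a b) (S a' b')}) *
              ρ * (hamming e z : ℝ) ^ 2) := by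
  have hq0 : ∀ a b, 0 ≤ ρ * S a b := fun a b => (mul_pos hρ0 (hSpos a b)).le
  have hq1 : ∀ a b, ρ * S a b ≤ 1 := fun a b => (hρ1 a b).le
  refine le_exp_neg_sSup_image_add ⟨1, by simp⟩ fun t ht => ?_
  have hKt := sum_upperPairs_Kt_le hSsym hSpos (Set.Ioc_subset_Icc_self ht) e z
  calc _ ≤ Real.exp (-(t * ((n : ℝ) ^ 2 * x))) *
        condExp ρ S z (fun A => Real.exp (t * centeredLogLikRatio ρ S z e A)) :=
        condProb_le_exp_mul_condExp (edgeDensity_nonneg hq0 hq1 z) ht.1.le fun A hA hlt =>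
          mul_lt_of_lt_div_of_nonneg (by positivity) hx
            (by rwa [half_sum_centered_oab_eq ρ hSsym z e hA] at hlt)
    _ ≤ Real.exp (-(t * ((n : ℝ) ^ 2 * x))) *
        Real.exp (ρ * ∑ p ∈ upperPairs n, Kt t (S (z p.1) (z p.2)) (S (e p.1) (e p.2))) := by
        gcongr
        exact condExp_exp_centeredLogLikRatio_le hSpos hq0 hq1 z e t
    _ ≤ Real.exp (-((n : ℝ) ^ 2 * x * t - ρ * (n : ℝ) ^ 2 * CtRS t (confusion e z) S)
          + sSup (DSet S) * ρ * (hamming e z : ℝ) ^ 2) := by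
        rw [← Real.exp_add]
        exact Real.exp_le_exp.2 (by nlinarith [mul_le_mul_of_nonneg_left hKt hρ0.le])

end SBM
end
end

section
/- Let 0 < s_min ≤ s_max. There exists a constant c > 0 depending only on s_min and s_max such that for all p, q ∈ [s_min, s_max] and all ρ ∈ (0, 1/(2 s_max)]: KL(ρp‖ρq) ≥ ρ K₁(p‖q) − c ρ², where KL(s‖t) = s log(s/t) + (1−s) log((1−s)/(1−t)) is the Kullback–Leibler divergence between Bernoulli(s) and Bernoulli(t), and K₁(p‖q) = p log(p/q) + q − p. -/
open Finset Filter
open scoped Classical BigOperators Topology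

noncomputable section

namespace SBM

variable {n k : ℕ}

/-! The Bernoulli divergence dominates the Poisson one, `K₁(a‖b) ≤ KL(a‖b)`, with no second-order
loss: the elementary bound `log x ≥ 1 - 1/x` gives `(1-a) log((1-a)/(1-b)) ≥ b - a`. Since `K₁` is
homogeneous of degree one, `KL(ρp‖ρq) ≥ ρ K₁(p‖q)`, so any `c > 0` works. -/

lemma K1_mul_left {ρ : ℝ} (hρ : ρ ≠ 0) (p q : ℝ) : K1 (ρ * p) (ρ * q) = ρ * K1 p q := by
  unfold K1
  rw [mul_div_mul_left _ _ hρ]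
  ring

lemma K1_le_KLBern {a b : ℝ} (ha : a < 1) (hb : b < 1) : K1 a b ≤ KLBern a b := by
  have hratio : 0 < (1 - a) / (1 - b) := div_pos (by linarith) (by linarith)
  have hsecond : b - a ≤ (1 - a) * Real.log ((1 - a) / (1 - b)) :=
    calc b - a = (1 - a) * (1 - ((1 - a) / (1 - b))⁻¹) := by
          field_simp [(by linarith : 1 - a ≠ 0), (by linarith : 1 - b ≠ 0)]
          ring
      _ ≤ (1 - a) * Real.log ((1 - a) / (1 - b)) :=
          mul_le_mul_of_nonneg_left (Real.one_sub_inv_le_log_of_pos hratio) (by linarith)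
  unfold K1 KLBern
  linarith

lemma mul_lt_one_of_le_one_div_two_mul {ρ s x : ℝ} (hρ : 0 < ρ) (hρs : ρ ≤ 1 / (2 * s))
    (hx : x ≤ s) : ρ * x < 1 := by
  have hs : 0 < s := by
    by_contra! hs
    have : 1 / (2 * s) ≤ 0 := div_nonpos_of_nonneg_of_nonpos zero_le_one (by linarith)
    linarith
  have hρs' : ρ * (2 * s) ≤ 1 := (le_div_iff₀ (by positivity)).mp hρs
  nlinarith

theorem stmt19_general (smin smax : ℝ) :
    ∃ c > (0 : ℝ), ∀ p q ρ : ℝ, p ∈ Set.Icc smin smax → q ∈ Set.Icc smin smax →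
      0 < ρ → ρ ≤ 1 / (2 * smax) →
      ρ * K1 p q - c * ρ ^ 2 ≤ KLBern (ρ * p) (ρ * q) := by
  refine ⟨1, one_pos, ?_⟩
  rintro p q ρ ⟨-, hp⟩ ⟨-, hq⟩ hρ hρs
  calc ρ * K1 p q - 1 * ρ ^ 2 ≤ ρ * K1 p q := sub_le_self _ (by positivity)
    _ = K1 (ρ * p) (ρ * q) := (K1_mul_left hρ.ne' p q).symm
    _ ≤ KLBern (ρ * p) (ρ * q) :=
        K1_le_KLBern (mul_lt_one_of_le_one_div_two_mul hρ hρs hp)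
          (mul_lt_one_of_le_one_div_two_mul hρ hρs hq)

/-- Bernoulli KL divergence versus its Poisson-type approximation. -/
theorem stmt19 (smin smax : ℝ) (h0 : 0 < smin) (hle : smin ≤ smax) :
    ∃ c > (0 : ℝ), ∀ p q ρ : ℝ, p ∈ Set.Icc smin smax → q ∈ Set.Icc smin smax →
      0 < ρ → ρ ≤ 1 / (2 * smax) →
      ρ * K1 p q - c * ρ ^ 2 ≤ KLBern (ρ * p) (ρ * q) :=
  stmt19_general smin smax
end SBM
end
end
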